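/- arXiv:2104.09167 — 7 statements merged into one kernel-verified Lean document; each statement's English description precedes it below -/
import Mathlib

section
/- For every integer n ≥ 6, the metric dimension of the convex polytope graph S_n equals 3, i.e., dim(S_n) = 3. -/
open SimpleGraph

/-- `R` is a resolving set of `G`: every pair of distinct vertices is
distinguished by its distance to some vertex of `R`. -/
def IsResolving {V : Type*} (G : SimpleGraph V) (R : Set V) : Prop :=
  ∀ u v : V, u ≠ v → ∃ w ∈ R, G.dist u w ≠ G.dist v w

/-- `R` is a fault-tolerant resolving set of `G`. -/
def IsFTResolving {V : Type*} (G : SimpleGraph V) (R : Set V) : Prop :=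
  IsResolving G R ∧ ∀ w ∈ R, IsResolving G (R \ {w})

/-- `R` is an independent set of vertices of `G`. -/
def IsIndepSet {V : Type*} (G : SimpleGraph V) (R : Set V) : Prop :=
  ∀ u ∈ R, ∀ v ∈ R, ¬ G.Adj u v

/-- `R` is an independent fault-tolerant resolving set of `G`. -/
def IsIFTResolving {V : Type*} (G : SimpleGraph V) (R : Set V) : Prop :=
  IsFTResolving G R ∧ _root_.IsIndepSet G R

/-- The metric dimension of `G`. -/
noncomputable def metricDim {V : Type*} (G : SimpleGraph V) : ℕ :=
  sInf {k | ∃ R : Set V, IsResolving G R ∧ R.ncard = k}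

/-- The fault-tolerant metric dimension of `G`. -/
noncomputable def ftMetricDim {V : Type*} (G : SimpleGraph V) : ℕ :=
  sInf {k | ∃ R : Set V, IsFTResolving G R ∧ R.ncard = k}

/-- The independent fault-tolerant resolving number of `G`. -/
noncomputable def ifr {V : Type*} (G : SimpleGraph V) : ℕ :=
  sInf {k | ∃ R : Set V, IsIFTResolving G R ∧ R.ncard = k}

/-- The convex polytope graph `S_n` on vertex set `{1,2,3,4} × ZMod n`:
cycle edges `jᵣˡ jᵣˡ⁺¹` for `r = 1,2,3,4`, plus edges
`j₁ˡ j₂ˡ`, `j₂ˡ j₃ˡ`, `j₃ˡ j₄ˡ`, and `j₃ˡ j₂ˡ⁺¹`. -/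
def convexPolytopeS (n : ℕ) : SimpleGraph (Fin 4 × ZMod n) :=
  SimpleGraph.fromRel (fun p q =>
    (p.1 = q.1 ∧ q.2 = p.2 + 1) ∨
    (p.1 = 0 ∧ q.1 = 1 ∧ q.2 = p.2) ∨
    (p.1 = 1 ∧ q.1 = 2 ∧ q.2 = p.2) ∨
    (p.1 = 2 ∧ q.1 = 3 ∧ q.2 = p.2) ∨
    (p.1 = 2 ∧ q.1 = 1 ∧ q.2 = p.2 + 1))


def FF (n r k : ℕ) : ℕ :=
  if r = 0 then min k (n - k)
  else if r = 1 then min k (n - k) + 1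
  else if r = 2 then min k (n - 1 - k) + 2
  else min k (n - 1 - k) + 3

lemma FF0 {n k : ℕ} : FF n 0 k = min k (n - k) := by norm_num [FF]
lemma FF1 {n k : ℕ} : FF n 1 k = min k (n - k) + 1 := by norm_num [FF]
lemma FF2 {n k : ℕ} : FF n 2 k = min k (n - 1 - k) + 2 := by norm_num [FF]
lemma FF3 {n k : ℕ} : FF n 3 k = min k (n - 1 - k) + 3 := by norm_num [FF]

lemma e0v : ((0 : Fin 4)).val = 0 := rfl
lemma e1v : ((1 : Fin 4)).val = 1 := rfl
lemma e2v : ((2 : Fin 4)).val = 2 := rfl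
lemma e3v : ((3 : Fin 4)).val = 3 := rfl

section zmod
variable {n : ℕ} [NeZero n]

lemma cv (x : ZMod n) : ((x.val : ℕ) : ZMod n) = x := by
  rw [ZMod.natCast_val, ZMod.cast_id]

lemma val_add_one (hn : 2 ≤ n) (x : ZMod n) :
    (x + 1).val = if x.val + 1 = n then 0 else x.val + 1 := by
  have h1 : x + 1 = ((x.val + 1 : ℕ) : ZMod n) := by push_cast [cv]; ring
  rw [h1, ZMod.val_natCast]
  have := ZMod.val_lt x
  split_ifs with h
  · simp [h]
  · exact Nat.mod_eq_of_lt (by omega)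

lemma val_sub_one (hn : 2 ≤ n) (x : ZMod n) :
    (x - 1).val = if x.val = 0 then n - 1 else x.val - 1 := by
  have h1 : x - 1 = ((x.val + n - 1 : ℕ) : ZMod n) := by
    have h2 : (x.val + n - 1 : ℕ) = x.val + (n - 1) := by omega
    rw [h2]; push_cast [cv, Nat.cast_sub (by omega : 1 ≤ n)]
    simp [ZMod.natCast_self]; ring
  rw [h1, ZMod.val_natCast]
  have := ZMod.val_lt x
  split_ifs with h
  · have h3 : x.val + n - 1 = n - 1 := by omega
    rw [h3]; exact Nat.mod_eq_of_lt (by omega)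
  · have h2 : (x.val + n - 1) = (x.val - 1) + n := by omega
    rw [h2, Nat.add_mod_right]; exact Nat.mod_eq_of_lt (by omega)

lemma val_sub' (x y : ZMod n) :
    (x - y).val = if y.val ≤ x.val then x.val - y.val else x.val + n - y.val := by
  have h1 : x - y = ((x.val + n - y.val : ℕ) : ZMod n) := by
    have h2 : (x.val + n - y.val : ℕ) = x.val + (n - y.val) := by
      have := ZMod.val_lt y; omega
    rw [h2]; push_cast [cv, Nat.cast_sub (le_of_lt (ZMod.val_lt y))]
    simp [ZMod.natCast_self]; ring
  rw [h1, ZMod.val_natCast]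
  have hx := ZMod.val_lt x
  have hy := ZMod.val_lt y
  split_ifs with h
  · have h2 : (x.val + n - y.val) = (x.val - y.val) + n := by omega
    rw [h2, Nat.add_mod_right]; exact Nat.mod_eq_of_lt (by omega)
  · exact Nat.mod_eq_of_lt (by omega)

lemma val_ne_of_ne {x y : ZMod n} (h : x ≠ y) : x.val ≠ y.val := by
  intro h2; exact h (by rw [← cv x, ← cv y, h2])

lemma val_neg_sum {x y : ZMod n} (h : x ≠ y) :
    (x - y).val + (y - x).val = n := by
  have h2 := val_ne_of_ne h
  have hx := ZMod.val_lt x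
  have hy := ZMod.val_lt y
  rw [val_sub', val_sub']
  split_ifs <;> omega

lemma val_cast_lt {j : ℕ} (h : j < n) : ((j : ℕ) : ZMod n).val = j := by
  rw [ZMod.val_natCast]; exact Nat.mod_eq_of_lt h

end zmod

section graph
variable {n : ℕ}

lemma adj_iff (p q : Fin 4 × ZMod n) :
    (convexPolytopeS n).Adj p q ↔ p ≠ q ∧
      (((p.1 = q.1 ∧ q.2 = p.2 + 1) ∨
        (p.1 = 0 ∧ q.1 = 1 ∧ q.2 = p.2) ∨
        (p.1 = 1 ∧ q.1 = 2 ∧ q.2 = p.2) ∨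
        (p.1 = 2 ∧ q.1 = 3 ∧ q.2 = p.2) ∨
        (p.1 = 2 ∧ q.1 = 1 ∧ q.2 = p.2 + 1)) ∨
       ((q.1 = p.1 ∧ p.2 = q.2 + 1) ∨
        (q.1 = 0 ∧ p.1 = 1 ∧ p.2 = q.2) ∨
        (q.1 = 1 ∧ p.1 = 2 ∧ p.2 = q.2) ∨
        (q.1 = 2 ∧ p.1 = 3 ∧ p.2 = q.2) ∨
        (q.1 = 2 ∧ p.1 = 1 ∧ p.2 = q.2 + 1))) := by
  rw [convexPolytopeS]
  exact SimpleGraph.fromRel_adj _ p q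

variable (hn : 6 ≤ n)
include hn

lemma ne_succ (l : ZMod n) : l ≠ l + 1 := by
  haveI : NeZero n := ⟨by omega⟩
  intro h
  have h2 := congrArg ZMod.val h
  rw [val_add_one (by omega) l] at h2
  have := ZMod.val_lt l
  split_ifs at h2 <;> omega

lemma adj_ring (r : Fin 4) (l : ZMod n) :
    (convexPolytopeS n).Adj (r, l) (r, l + 1) := by
  rw [adj_iff]
  haveI : Fact (1 < n) := ⟨by omega⟩
  refine ⟨?_, Or.inl (Or.inl ⟨rfl, rfl⟩)⟩
  intro h
  exact ne_succ hn l (congrArg Prod.snd h)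

lemma adj01 (l : ZMod n) : (convexPolytopeS n).Adj (0, l) (1, l) := by
  rw [adj_iff]
  refine ⟨by simp [Prod.ext_iff], Or.inl (Or.inr (Or.inl ⟨rfl, rfl, rfl⟩))⟩

lemma adj12 (l : ZMod n) : (convexPolytopeS n).Adj (1, l) (2, l) := by
  rw [adj_iff]
  refine ⟨by simp [Prod.ext_iff], Or.inl (Or.inr (Or.inr (Or.inl ⟨rfl, rfl, rfl⟩)))⟩

lemma adj23 (l : ZMod n) : (convexPolytopeS n).Adj (2, l) (3, l) := by
  rw [adj_iff]
  refine ⟨by simp [Prod.ext_iff], Or.inl (Or.inr (Or.inr (Or.inr (Or.inl ⟨rfl, rfl, rfl⟩))))⟩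

lemma adj_diag (l : ZMod n) : (convexPolytopeS n).Adj (2, l) (1, l + 1) := by
  rw [adj_iff]
  refine ⟨by simp [Prod.ext_iff], Or.inl (Or.inr (Or.inr (Or.inr (Or.inr ⟨rfl, rfl, rfl⟩))))⟩

lemma reach_ring (r : Fin 4) (l : ZMod n) (j : ℕ) :
    (convexPolytopeS n).Reachable (r, l) (r, l + (j : ZMod n)) := by
  induction j with
  | zero => simpa using SimpleGraph.Reachable.refl (r, l)
  | succ j ih =>
      refine ih.trans ?_
      have h := (adj_ring hn r (l + (j : ZMod n))).reachable
      have e : l + ((j : ℕ) + 1 : ℕ) = l + (j : ZMod n) + 1 := by push_cast; ring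
      rw [e]
      exact h

lemma reach_zero (p : Fin 4 × ZMod n) :
    (convexPolytopeS n).Reachable p ((0 : Fin 4), (0 : ZMod n)) := by
  haveI : NeZero n := ⟨by omega⟩
  obtain ⟨r, l⟩ := p
  have h1 : (convexPolytopeS n).Reachable (r, l) (r, 0) := by
    have h := reach_ring hn r l ((0 - l : ZMod n)).val
    rw [cv] at h
    simpa using h
  refine h1.trans ?_
  have h0 := (adj01 hn (0 : ZMod n)).reachable
  have h1' := (adj12 hn (0 : ZMod n)).reachable
  have h2 := (adj23 hn (0 : ZMod n)).reachable
  fin_cases r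
  · exact SimpleGraph.Reachable.refl _
  · exact h0.symm
  · exact h1'.symm.trans h0.symm
  · exact (h2.symm.trans h1'.symm).trans h0.symm

lemma connected : (convexPolytopeS n).Connected := by
  rw [SimpleGraph.connected_iff]
  refine ⟨fun p q => (reach_zero hn p).trans (reach_zero hn q).symm, ⟨((0:Fin 4), (0:ZMod n))⟩⟩

lemma dist_of_adj {p q : Fin 4 × ZMod n} (h : (convexPolytopeS n).Adj p q) :
    (convexPolytopeS n).dist p q = 1 :=
  SimpleGraph.dist_eq_one_iff_adj.mpr h

lemma dist_ring_le (r : Fin 4) (l : ZMod n) (j : ℕ) :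
    (convexPolytopeS n).dist (r, l) (r, l + (j : ZMod n)) ≤ j := by
  induction j with
  | zero => simp
  | succ j ih =>
      have e : l + ((j : ℕ) + 1 : ℕ) = l + (j : ZMod n) + 1 := by push_cast; ring
      rw [e]
      calc (convexPolytopeS n).dist (r, l) (r, l + (j : ZMod n) + 1)
          ≤ (convexPolytopeS n).dist (r, l) (r, l + (j : ZMod n)) +
            (convexPolytopeS n).dist (r, l + (j : ZMod n)) (r, l + (j : ZMod n) + 1) :=
            (connected hn).dist_triangle
        _ ≤ j + 1 := by
            have := dist_of_adj hn (adj_ring hn r (l + (j : ZMod n)))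
            omega

lemma dist_ring_le' (r : Fin 4) (l m : ZMod n) :
    (convexPolytopeS n).dist (r, l) (r, m) ≤ min ((l - m).val) (n - (l - m).val) := by
  haveI : NeZero n := ⟨by omega⟩
  by_cases h : l = m
  · subst h; simp
  · -- route 1 : forward, length (m - l).val
    have h1 : (convexPolytopeS n).dist (r, l) (r, m) ≤ (m - l).val := by
      have := dist_ring_le hn r l ((m - l).val)
      rwa [cv, add_sub_cancel] at this
    -- route 2 : backward, length (l - m).val
    have h2 : (convexPolytopeS n).dist (r, l) (r, m) ≤ (l - m).val := by
      have := dist_ring_le hn r m ((l - m).val)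
      rw [cv, add_sub_cancel] at this
      rwa [SimpleGraph.dist_comm] at this
    have hs : (l - m).val + (m - l).val = n := val_neg_sum h
    omega

end graph

section dist
variable {n : ℕ} (hn : 6 ≤ n)
include hn

lemma le0_1 (l m : ZMod n) :
    (convexPolytopeS n).dist (1, l) ((0 : Fin 4), m) ≤ min ((l-m).val) (n - (l-m).val) + 1 :=
  calc (convexPolytopeS n).dist (1, l) ((0:Fin 4), m)
      ≤ (convexPolytopeS n).dist (1, l) (1, m) +
        (convexPolytopeS n).dist (1, m) ((0:Fin 4), m) := (connected hn).dist_triangle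
    _ ≤ min ((l-m).val) (n - (l-m).val) + 1 := by
        have h1 := dist_ring_le' hn 1 l m
        have h2 := dist_of_adj hn (adj01 hn m).symm
        omega

lemma le0_2 (l m : ZMod n) :
    (convexPolytopeS n).dist (2, l) ((0 : Fin 4), m) ≤ min ((l-m).val) (n - 1 - (l-m).val) + 2 := by
  haveI : NeZero n := ⟨by omega⟩
  have hk := ZMod.val_lt (l - m)
  have h1 : (convexPolytopeS n).dist (2, l) ((0:Fin 4), m) ≤ (l-m).val + 2 :=
    calc (convexPolytopeS n).dist (2, l) ((0:Fin 4), m)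
        ≤ (convexPolytopeS n).dist (2, l) (1, l) +
          (convexPolytopeS n).dist (1, l) ((0:Fin 4), m) := (connected hn).dist_triangle
      _ ≤ (l-m).val + 2 := by
          have h2 := dist_of_adj hn (adj12 hn l).symm
          have h3 := le0_1 hn l m
          omega
  have h2 : (convexPolytopeS n).dist (2, l) ((0:Fin 4), m) ≤ (n - 1 - (l-m).val) + 2 := by
    have e : l + 1 - m = (l - m) + 1 := by ring
    have hv : (l + 1 - m).val = if (l-m).val + 1 = n then 0 else (l-m).val + 1 := by
      rw [e, val_add_one (by omega)]
    calc (convexPolytopeS n).dist (2, l) ((0:Fin 4), m)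
        ≤ (convexPolytopeS n).dist (2, l) (1, l + 1) +
          (convexPolytopeS n).dist (1, l + 1) ((0:Fin 4), m) := (connected hn).dist_triangle
      _ ≤ (n - 1 - (l-m).val) + 2 := by
          have h3 := dist_of_adj hn (adj_diag hn l)
          have h4 := le0_1 hn (l + 1) m
          rw [hv] at h4
          split_ifs at h4 <;> omega
  omega

lemma le0_3 (l m : ZMod n) :
    (convexPolytopeS n).dist (3, l) ((0 : Fin 4), m) ≤ min ((l-m).val) (n - 1 - (l-m).val) + 3 :=
  calc (convexPolytopeS n).dist (3, l) ((0:Fin 4), m)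
      ≤ (convexPolytopeS n).dist (3, l) (2, l) +
        (convexPolytopeS n).dist (2, l) ((0:Fin 4), m) := (connected hn).dist_triangle
    _ ≤ _ := by
        have h2 := dist_of_adj hn (adj23 hn l).symm
        have h3 := le0_2 hn l m
        omega

lemma le0 (r : Fin 4) (l m : ZMod n) :
    (convexPolytopeS n).dist (r, l) ((0 : Fin 4), m) ≤ FF n r.val ((l-m).val) := by
  fin_cases r
  · simpa [FF] using dist_ring_le' hn 0 l m
  · simpa [FF] using le0_1 hn l m
  · simpa [FF] using le0_2 hn l m
  · simpa [FF] using le0_3 hn l m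

lemma le3_2 (l m : ZMod n) :
    (convexPolytopeS n).dist (2, l) ((3 : Fin 4), m) ≤ min ((m-l).val) (n - (m-l).val) + 1 :=
  haveI : NeZero n := ⟨by omega⟩
  calc (convexPolytopeS n).dist (2, l) ((3:Fin 4), m)
      ≤ (convexPolytopeS n).dist (2, l) (2, m) +
        (convexPolytopeS n).dist (2, m) ((3:Fin 4), m) := (connected hn).dist_triangle
    _ ≤ _ := by
        have h1 := dist_ring_le' hn 2 l m
        have h2 := dist_of_adj hn (adj23 hn m)
        rcases eq_or_ne l m with rfl | h3
        · have h0 : (convexPolytopeS n).dist ((2:Fin 4), l) ((2:Fin 4), l) = 0 :=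
            SimpleGraph.dist_self
          have hv : (l - l).val = 0 := by simp
          omega
        · have := val_neg_sum h3; omega

lemma le3_1 (l m : ZMod n) :
    (convexPolytopeS n).dist (1, l) ((3 : Fin 4), m) ≤ min ((m-l).val) (n - 1 - (m-l).val) + 2 := by
  haveI : NeZero n := ⟨by omega⟩
  have hk := ZMod.val_lt (m - l)
  have h1 : (convexPolytopeS n).dist (1, l) ((3:Fin 4), m) ≤ (m-l).val + 2 :=
    calc (convexPolytopeS n).dist (1, l) ((3:Fin 4), m)
        ≤ (convexPolytopeS n).dist (1, l) (2, l) +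
          (convexPolytopeS n).dist (2, l) ((3:Fin 4), m) := (connected hn).dist_triangle
      _ ≤ _ := by
          have h2 := dist_of_adj hn (adj12 hn l)
          have h3 := le3_2 hn l m
          omega
  have h2 : (convexPolytopeS n).dist (1, l) ((3:Fin 4), m) ≤ (n - 1 - (m-l).val) + 2 := by
    have e : m - (l - 1) = (m - l) + 1 := by ring
    have hv : (m - (l - 1)).val = if (m-l).val + 1 = n then 0 else (m-l).val + 1 := by
      rw [e, val_add_one (by omega)]
    have hadj : (convexPolytopeS n).Adj (1, l) (2, l - 1) := by
      have := adj_diag hn (l - 1)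
      rw [sub_add_cancel] at this
      exact this.symm
    calc (convexPolytopeS n).dist (1, l) ((3:Fin 4), m)
        ≤ (convexPolytopeS n).dist (1, l) (2, l - 1) +
          (convexPolytopeS n).dist (2, l - 1) ((3:Fin 4), m) := (connected hn).dist_triangle
      _ ≤ _ := by
          have h3 := dist_of_adj hn hadj
          have h4 := le3_2 hn (l - 1) m
          rw [hv] at h4
          split_ifs at h4 <;> omega
  omega

lemma le3_0 (l m : ZMod n) :
    (convexPolytopeS n).dist ((0 : Fin 4), l) ((3 : Fin 4), m) ≤
      min ((m-l).val) (n - 1 - (m-l).val) + 3 :=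
  calc (convexPolytopeS n).dist ((0:Fin 4), l) ((3:Fin 4), m)
      ≤ (convexPolytopeS n).dist ((0:Fin 4), l) (1, l) +
        (convexPolytopeS n).dist (1, l) ((3:Fin 4), m) := (connected hn).dist_triangle
    _ ≤ _ := by
        have h2 := dist_of_adj hn (adj01 hn l)
        have h3 := le3_1 hn l m
        omega

lemma le3 (r : Fin 4) (l m : ZMod n) :
    (convexPolytopeS n).dist (r, l) ((3 : Fin 4), m) ≤ FF n (3 - r.val) ((m-l).val) := by
  fin_cases r
  · simpa [FF] using le3_0 hn l m
  · simpa [FF] using le3_1 hn l m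
  · simpa [FF] using le3_2 hn l m
  · have h := dist_ring_le' hn 3 l m
    haveI : NeZero n := ⟨by omega⟩
    show (convexPolytopeS n).dist ((3:Fin 4), l) ((3:Fin 4), m) ≤ FF n 0 ((m-l).val)
    simp only [FF, if_pos rfl]
    rcases eq_or_ne l m with rfl | h2
    · have h0 : (convexPolytopeS n).dist ((3:Fin 4), l) ((3:Fin 4), l) = 0 :=
        SimpleGraph.dist_self
      have hv : (l - l).val = 0 := by simp
      omega
    · have h4 := val_neg_sum h2
      have hk := ZMod.val_lt (l - m)
      have hk2 := ZMod.val_lt (m - l)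
      have hd : min ((l-m).val) (n-(l-m).val) = min ((m-l).val) (n-(m-l).val) := by omega
      exact le_trans h (le_of_eq hd)

end dist

section pot

lemma pot_bound {V : Type*} {G : SimpleGraph V} (hc : G.Connected) (φ : V → ℕ)
    (h : ∀ u v, G.Adj u v → φ u ≤ φ v + 1) (u v : V) (hv : φ v = 0) :
    φ u ≤ G.dist u v := by
  obtain ⟨w, hw⟩ := (hc u v).exists_walk_length_eq_dist
  have key : ∀ {a b : V} (p : G.Walk a b), φ a ≤ p.length + φ b := by
    intro a b p
    induction p with
    | nil => simp
    | @cons x y z ha p ih =>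
        have h2 := h x y ha
        rw [SimpleGraph.Walk.length_cons]
        omega
  have h2 := key w
  omega

variable {n : ℕ} (hn : 6 ≤ n)
include hn

lemma lip0 (m : ZMod n) : ∀ p q : Fin 4 × ZMod n, (convexPolytopeS n).Adj p q →
    FF n p.1.val ((p.2 - m).val) ≤ FF n q.1.val ((q.2 - m).val) + 1 := by
  haveI : NeZero n := ⟨by omega⟩
  have e2 : ((2 : Fin 4)).val = 2 := rfl
  have e3 : ((3 : Fin 4)).val = 3 := rfl
  rintro ⟨r, l⟩ ⟨s, l'⟩ h
  rw [adj_iff] at h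
  obtain ⟨-, h⟩ := h
  simp only at h
  have hkl := ZMod.val_lt (l - m)
  have hkl' := ZMod.val_lt (l' - m)
  rcases h with (⟨h1, h2⟩ | ⟨h1, h1', h2⟩ | ⟨h1, h1', h2⟩ | ⟨h1, h1', h2⟩ | ⟨h1, h1', h2⟩) |
    (⟨h1, h2⟩ | ⟨h1, h1', h2⟩ | ⟨h1, h1', h2⟩ | ⟨h1, h1', h2⟩ | ⟨h1, h1', h2⟩)
  · simp only [h1, h2]
    rw [show l + 1 - m = (l - m) + 1 from by ring, val_add_one (by omega)]
    simp only [FF]; split_ifs <;> omega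
  · simp only [h1, h1', h2, Fin.val_zero, Fin.val_one]
    simp only [FF]; split_ifs <;> omega
  · simp only [h1, h1', h2, Fin.val_one, e2]
    simp only [FF]; split_ifs <;> omega
  · simp only [h1, h1', h2, e2, e3]
    simp only [FF]; split_ifs <;> omega
  · simp only [h1, h1', h2, e2, Fin.val_one]
    rw [show l + 1 - m = (l - m) + 1 from by ring, val_add_one (by omega)]
    simp only [FF]; split_ifs <;> omega
  · simp only [h1, h2]
    rw [show l' + 1 - m = (l' - m) + 1 from by ring, val_add_one (by omega)]
    simp only [FF]; split_ifs <;> omega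
  · simp only [h1, h1', h2, Fin.val_zero, Fin.val_one]
    simp only [FF]; split_ifs <;> omega
  · simp only [h1, h1', h2, Fin.val_one, e2]
    simp only [FF]; split_ifs <;> omega
  · simp only [h1, h1', h2, e2, e3]
    simp only [FF]; split_ifs <;> omega
  · simp only [h1, h1', h2, e2, Fin.val_one]
    rw [show l' + 1 - m = (l' - m) + 1 from by ring, val_add_one (by omega)]
    simp only [FF]; split_ifs <;> omega

lemma lip3 (m : ZMod n) : ∀ p q : Fin 4 × ZMod n, (convexPolytopeS n).Adj p q →
    FF n (3 - p.1.val) ((m - p.2).val) ≤ FF n (3 - q.1.val) ((m - q.2).val) + 1 := by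
  haveI : NeZero n := ⟨by omega⟩
  have e2 : ((2 : Fin 4)).val = 2 := rfl
  have e3 : ((3 : Fin 4)).val = 3 := rfl
  rintro ⟨r, l⟩ ⟨s, l'⟩ h
  rw [adj_iff] at h
  obtain ⟨-, h⟩ := h
  simp only at h
  have hkl := ZMod.val_lt (m - l)
  have hkl' := ZMod.val_lt (m - l')
  rcases h with (⟨h1, h2⟩ | ⟨h1, h1', h2⟩ | ⟨h1, h1', h2⟩ | ⟨h1, h1', h2⟩ | ⟨h1, h1', h2⟩) |
    (⟨h1, h2⟩ | ⟨h1, h1', h2⟩ | ⟨h1, h1', h2⟩ | ⟨h1, h1', h2⟩ | ⟨h1, h1', h2⟩)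
  · simp only [h1, h2]
    rw [show m - (l + 1) = (m - l) - 1 from by ring, val_sub_one (by omega)]
    simp only [FF]; split_ifs <;> omega
  · simp only [h1, h1', h2, Fin.val_zero, Fin.val_one]
    simp only [FF]; split_ifs <;> omega
  · simp only [h1, h1', h2, Fin.val_one, e2]
    simp only [FF]; split_ifs <;> omega
  · simp only [h1, h1', h2, e2, e3]
    simp only [FF]; split_ifs <;> omega
  · simp only [h1, h1', h2, e2, Fin.val_one]
    rw [show m - (l + 1) = (m - l) - 1 from by ring, val_sub_one (by omega)]
    simp only [FF]; split_ifs <;> omega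
  · simp only [h1, h2]
    rw [show m - (l' + 1) = (m - l') - 1 from by ring, val_sub_one (by omega)]
    simp only [FF]; split_ifs <;> omega
  · simp only [h1, h1', h2, Fin.val_zero, Fin.val_one]
    simp only [FF]; split_ifs <;> omega
  · simp only [h1, h1', h2, Fin.val_one, e2]
    simp only [FF]; split_ifs <;> omega
  · simp only [h1, h1', h2, e2, e3]
    simp only [FF]; split_ifs <;> omega
  · simp only [h1, h1', h2, e2, Fin.val_one]
    rw [show m - (l' + 1) = (m - l') - 1 from by ring, val_sub_one (by omega)]
    simp only [FF]; split_ifs <;> omega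

lemma dist0 (r : Fin 4) (l m : ZMod n) :
    (convexPolytopeS n).dist (r, l) ((0 : Fin 4), m) = FF n r.val ((l - m).val) := by
  haveI : NeZero n := ⟨by omega⟩
  refine le_antisymm (le0 hn r l m) ?_
  have h := pot_bound (connected hn) (fun p => FF n p.1.val ((p.2 - m).val))
    (lip0 hn m) (r, l) ((0 : Fin 4), m) ?_
  · exact h
  · simp only [Fin.val_zero, sub_self, ZMod.val_zero, FF, if_pos rfl]
    simp

lemma dist3 (r : Fin 4) (l m : ZMod n) :
    (convexPolytopeS n).dist (r, l) ((3 : Fin 4), m) = FF n (3 - r.val) ((m - l).val) := by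
  haveI : NeZero n := ⟨by omega⟩
  refine le_antisymm (le3 hn r l m) ?_
  have h := pot_bound (connected hn) (fun p => FF n (3 - p.1.val) ((m - p.2).val))
    (lip3 hn m) (r, l) ((3 : Fin 4), m) ?_
  · exact h
  · have e3 : ((3 : Fin 4)).val = 3 := rfl
    simp only [e3, sub_self, ZMod.val_zero, Nat.sub_self, FF, if_pos rfl]
    simp

end pot

section lower
variable {n : ℕ} (hn : 6 ≤ n)
include hn

lemma val_one6 : (1 : ZMod n).val = 1 := by
  haveI : NeZero n := ⟨by omega⟩
  rw [← Nat.cast_one, val_cast_lt (by omega)]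

lemma val_neg6 {w : ZMod n} (h : w.val ≠ 0) : (-w).val = n - w.val := by
  haveI : NeZero n := ⟨by omega⟩
  have hw : (0 : ZMod n) ≠ w := by
    intro h2
    exact h (by rw [← h2, ZMod.val_zero])
  have h3 := val_neg_sum hw
  rw [zero_sub, sub_zero] at h3
  omega

lemma val_neg_one6 : (-1 : ZMod n).val = n - 1 := by
  haveI : NeZero n := ⟨by omega⟩
  rw [val_neg6 hn (by rw [val_one6 hn]; omega), val_one6 hn]

lemma two_ne (l : ZMod n) : l + 1 ≠ l - 1 := by
  haveI : NeZero n := ⟨by omega⟩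
  intro h
  have h2 : ((2 : ℕ) : ZMod n) = 0 := by push_cast; linear_combination h
  rw [ZMod.natCast_eq_zero_iff] at h2
  have := Nat.le_of_dvd (by norm_num) h2
  omega

lemma no_mid (a b : Fin 4 × ZMod n) (ha : a.1 = 1 ∨ a.1 = 2)
    (hR : IsResolving (convexPolytopeS n) {a, b}) : False := by
  haveI : NeZero n := ⟨by omega⟩
  obtain ⟨r, l⟩ := a
  simp only at ha
  have key : ∀ u v : Fin 4 × ZMod n, u ≠ v →
      (convexPolytopeS n).dist u (r, l) = 1 → (convexPolytopeS n).dist v (r, l) = 1 →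
      (convexPolytopeS n).dist u b ≠ (convexPolytopeS n).dist v b := by
    intro u v huv hu hv
    obtain ⟨w, hw, hne⟩ := hR u v huv
    simp only [Set.mem_insert_iff, Set.mem_singleton_iff] at hw
    rcases hw with rfl | rfl
    · exact absurd (hu.trans hv.symm) hne
    · exact hne
  have tri : ∀ u : Fin 4 × ZMod n, (convexPolytopeS n).dist u (r, l) = 1 →
      (convexPolytopeS n).dist u b ≤ (convexPolytopeS n).dist (r, l) b + 1 ∧
      (convexPolytopeS n).dist (r, l) b ≤ (convexPolytopeS n).dist u b + 1 := by
    intro u hu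
    constructor
    · have h1 : (convexPolytopeS n).dist u b ≤
          (convexPolytopeS n).dist u (r, l) + (convexPolytopeS n).dist (r, l) b :=
        (connected hn).dist_triangle
      omega
    · have h1 : (convexPolytopeS n).dist (r, l) b ≤
          (convexPolytopeS n).dist (r, l) u + (convexPolytopeS n).dist u b :=
        (connected hn).dist_triangle
      rw [SimpleGraph.dist_comm (u := (r,l)) (v := u), hu] at h1
      omega
  have hne34 : ((r, l + 1) : Fin 4 × ZMod n) ≠ (r, l - 1) := by
    intro h
    exact two_ne hn l (congrArg Prod.snd h)
  have d3 : (convexPolytopeS n).dist (r, l + 1) (r, l) = 1 := by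
    rw [SimpleGraph.dist_comm]
    exact dist_of_adj hn (adj_ring hn r l)
  have d4 : (convexPolytopeS n).dist (r, l - 1) (r, l) = 1 := by
    have h := adj_ring hn r (l - 1)
    rw [sub_add_cancel] at h
    exact dist_of_adj hn h
  rcases ha with rfl | rfl
  · -- r = 1 : neighbours (0,l), (2,l), (1,l±1)
    have d1 : (convexPolytopeS n).dist ((0 : Fin 4), l) (1, l) = 1 :=
      dist_of_adj hn (adj01 hn l)
    have d2 : (convexPolytopeS n).dist ((2 : Fin 4), l) (1, l) = 1 :=
      dist_of_adj hn (adj12 hn l).symm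
    have k12 := key _ _ (by simp) d1 d2
    have k13 := key _ _ (by simp) d1 d3
    have k14 := key _ _ (by simp) d1 d4
    have k23 := key _ _ (by simp) d2 d3
    have k24 := key _ _ (by simp) d2 d4
    have k34 := key _ _ hne34 d3 d4
    have t1 := tri _ d1
    have t2 := tri _ d2
    have t3 := tri _ d3
    have t4 := tri _ d4
    omega
  · -- r = 2 : neighbours (1,l), (3,l), (2,l±1)
    have d1 : (convexPolytopeS n).dist ((1 : Fin 4), l) (2, l) = 1 :=
      dist_of_adj hn (adj12 hn l)
    have d2 : (convexPolytopeS n).dist ((3 : Fin 4), l) (2, l) = 1 :=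
      dist_of_adj hn (adj23 hn l).symm
    have k12 := key _ _ (by simp) d1 d2
    have k13 := key _ _ (by simp) d1 d3
    have k14 := key _ _ (by simp) d1 d4
    have k23 := key _ _ (by simp) d2 d3
    have k24 := key _ _ (by simp) d2 d4
    have k34 := key _ _ hne34 d3 d4
    have t1 := tri _ d1
    have t2 := tri _ d2
    have t3 := tri _ d3
    have t4 := tri _ d4
    omega

end lower

section wits
variable {n : ℕ} (hn : 6 ≤ n)
include hn

/-- generic witness for two layer-0 landmarks with 2d ≤ n-2 -/
lemma wit00A (m1 m2 : ZMod n) (hd : 2 * (m2 - m1).val ≤ n - 2) :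
    ∃ u v : Fin 4 × ZMod n, u ≠ v ∧
      (convexPolytopeS n).dist u ((0:Fin 4), m1) = (convexPolytopeS n).dist v ((0:Fin 4), m1) ∧
      (convexPolytopeS n).dist u ((0:Fin 4), m2) = (convexPolytopeS n).dist v ((0:Fin 4), m2) := by
  haveI : NeZero n := ⟨by omega⟩
  have hdlt := ZMod.val_lt (m2 - m1)
  refine ⟨((1:Fin 4), m2 + 1), ((2:Fin 4), m2), by simp, ?_, ?_⟩
  · rw [dist0 hn, dist0 hn, e1v, e2v]
    have hv : (m2 + 1 - m1).val = (m2 - m1).val + 1 := by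
      rw [show m2 + 1 - m1 = (m2 - m1) + 1 from by ring, val_add_one (by omega),
        if_neg (by omega)]
    rw [hv]
    simp only [FF1, FF2]
    omega
  · rw [dist0 hn, dist0 hn, e1v, e2v]
    rw [show m2 + 1 - m2 = 1 from by ring, show m2 - m2 = 0 from by ring,
      val_one6 hn, ZMod.val_zero]
    simp only [FF1, FF2]
    omega

lemma wit00 (m1 m2 : ZMod n) :
    ∃ u v : Fin 4 × ZMod n, u ≠ v ∧
      (convexPolytopeS n).dist u ((0:Fin 4), m1) = (convexPolytopeS n).dist v ((0:Fin 4), m1) ∧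
      (convexPolytopeS n).dist u ((0:Fin 4), m2) = (convexPolytopeS n).dist v ((0:Fin 4), m2) := by
  haveI : NeZero n := ⟨by omega⟩
  have hdlt := ZMod.val_lt (m2 - m1)
  by_cases hA : 2 * (m2 - m1).val ≤ n - 2
  · exact wit00A hn m1 m2 hA
  by_cases hE : n + 2 ≤ 2 * (m2 - m1).val
  · have hne : m2 ≠ m1 := by
      intro h; rw [h, sub_self, ZMod.val_zero] at hE; omega
    have hs := val_neg_sum hne
    obtain ⟨u, v, huv, h2, h1⟩ := wit00A hn m2 m1 (by omega)
    exact ⟨u, v, huv, h1, h2⟩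
  -- middle cases : 2d ∈ {n-1, n, n+1}
  have hd1 : (m2 - m1).val ≠ 0 := by omega
  by_cases hC : 2 * (m2 - m1).val = n
  · -- u = (0, m1+1), v = (0, m1-1)
    refine ⟨((0:Fin 4), m1 + 1), ((0:Fin 4), m1 - 1), ?_, ?_, ?_⟩
    · intro h; exact two_ne hn m1 (congrArg Prod.snd h)
    · rw [dist0 hn, dist0 hn, e0v]
      rw [show m1 + 1 - m1 = 1 from by ring, show m1 - 1 - m1 = -1 from by ring,
        val_one6 hn, val_neg_one6 hn]
      simp only [FF0]
      omega
    · rw [dist0 hn, dist0 hn, e0v]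
      have hvm : ((m2 - m1) - 1).val = (m2 - m1).val - 1 := by
        rw [val_sub_one (by omega), if_neg hd1]
      have hvp : ((m2 - m1) + 1).val = (m2 - m1).val + 1 := by
        rw [val_add_one (by omega), if_neg (by omega)]
      have h1 : (m1 + 1 - m2).val = n - ((m2 - m1).val - 1) := by
        rw [show m1 + 1 - m2 = -((m2 - m1) - 1) from by ring, val_neg6 hn (by omega), hvm]
      have h2 : (m1 - 1 - m2).val = n - ((m2 - m1).val + 1) := by
        rw [show m1 - 1 - m2 = -((m2 - m1) + 1) from by ring, val_neg6 hn (by omega), hvp]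
      rw [h1, h2]
      simp only [FF0]
      omega
  by_cases hB : 2 * (m2 - m1).val = n - 1
  · -- u = (1, m2+1), v = (2, m2-1)
    refine ⟨((1:Fin 4), m2 + 1), ((2:Fin 4), m2 - 1), by simp, ?_, ?_⟩
    · rw [dist0 hn, dist0 hn, e1v, e2v]
      have hvp : (m2 + 1 - m1).val = (m2 - m1).val + 1 := by
        rw [show m2 + 1 - m1 = (m2 - m1) + 1 from by ring, val_add_one (by omega),
          if_neg (by omega)]
      have hvm : (m2 - 1 - m1).val = (m2 - m1).val - 1 := by
        rw [show m2 - 1 - m1 = (m2 - m1) - 1 from by ring, val_sub_one (by omega), if_neg hd1]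
      rw [hvp, hvm]
      simp only [FF1, FF2]
      omega
    · rw [dist0 hn, dist0 hn, e1v, e2v]
      rw [show m2 + 1 - m2 = 1 from by ring, show m2 - 1 - m2 = -1 from by ring,
        val_one6 hn, val_neg_one6 hn]
      simp only [FF1, FF2]
      omega
  · -- 2d = n+1 : u = (1, m1+1), v = (2, m1-1)
    have hD : 2 * (m2 - m1).val = n + 1 := by omega
    refine ⟨((1:Fin 4), m1 + 1), ((2:Fin 4), m1 - 1), by simp, ?_, ?_⟩
    · rw [dist0 hn, dist0 hn, e1v, e2v]
      rw [show m1 + 1 - m1 = 1 from by ring, show m1 - 1 - m1 = -1 from by ring,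
        val_one6 hn, val_neg_one6 hn]
      simp only [FF1, FF2]
      omega
    · rw [dist0 hn, dist0 hn, e1v, e2v]
      have hvm : ((m2 - m1) - 1).val = (m2 - m1).val - 1 := by
        rw [val_sub_one (by omega), if_neg hd1]
      have hvp : ((m2 - m1) + 1).val = (m2 - m1).val + 1 := by
        rw [val_add_one (by omega), if_neg (by omega)]
      have h1 : (m1 + 1 - m2).val = n - ((m2 - m1).val - 1) := by
        rw [show m1 + 1 - m2 = -((m2 - m1) - 1) from by ring, val_neg6 hn (by omega), hvm]
      have h2 : (m1 - 1 - m2).val = n - ((m2 - m1).val + 1) := by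
        rw [show m1 - 1 - m2 = -((m2 - m1) + 1) from by ring, val_neg6 hn (by omega), hvp]
      rw [h1, h2]
      simp only [FF1, FF2]
      omega

end wits

section wits2
variable {n : ℕ} (hn : 6 ≤ n)
include hn

lemma cast_n_sub_one : ((n - 1 : ℕ) : ZMod n) = -1 := by
  haveI : NeZero n := ⟨by omega⟩
  push_cast [Nat.cast_sub (show 1 ≤ n by omega)]
  simp [ZMod.natCast_self]

lemma cast_n_sub_two : ((n - 2 : ℕ) : ZMod n) = -2 := by
  haveI : NeZero n := ⟨by omega⟩
  push_cast [Nat.cast_sub (show 2 ≤ n by omega)]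
  simp [ZMod.natCast_self]

lemma wit33A (m1 m2 : ZMod n) (hd : 2 * (m2 - m1).val ≤ n - 2) :
    ∃ u v : Fin 4 × ZMod n, u ≠ v ∧
      (convexPolytopeS n).dist u ((3:Fin 4), m1) = (convexPolytopeS n).dist v ((3:Fin 4), m1) ∧
      (convexPolytopeS n).dist u ((3:Fin 4), m2) = (convexPolytopeS n).dist v ((3:Fin 4), m2) := by
  haveI : NeZero n := ⟨by omega⟩
  have hdlt := ZMod.val_lt (m2 - m1)
  refine ⟨((1:Fin 4), m1), ((2:Fin 4), m1 - 1), by simp, ?_, ?_⟩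
  · rw [dist3 hn, dist3 hn, e1v, e2v]
    rw [show m1 - m1 = 0 from by ring, show m1 - (m1 - 1) = 1 from by ring,
      val_one6 hn, ZMod.val_zero]
    simp only [show (3:ℕ)-1 = 2 from rfl, show (3:ℕ)-2 = 1 from rfl, show (3:ℕ)-3 = 0 from rfl, FF0, FF1, FF2, FF3]
    omega
  · rw [dist3 hn, dist3 hn, e1v, e2v]
    have hv : (m2 - (m1 - 1)).val = (m2 - m1).val + 1 := by
      rw [show m2 - (m1 - 1) = (m2 - m1) + 1 from by ring, val_add_one (by omega),
        if_neg (by omega)]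
    rw [hv]
    simp only [show (3:ℕ)-1 = 2 from rfl, show (3:ℕ)-2 = 1 from rfl, show (3:ℕ)-3 = 0 from rfl, FF0, FF1, FF2, FF3]
    omega

lemma wit33 (m1 m2 : ZMod n) :
    ∃ u v : Fin 4 × ZMod n, u ≠ v ∧
      (convexPolytopeS n).dist u ((3:Fin 4), m1) = (convexPolytopeS n).dist v ((3:Fin 4), m1) ∧
      (convexPolytopeS n).dist u ((3:Fin 4), m2) = (convexPolytopeS n).dist v ((3:Fin 4), m2) := by
  haveI : NeZero n := ⟨by omega⟩
  have hdlt := ZMod.val_lt (m2 - m1)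
  by_cases hA : 2 * (m2 - m1).val ≤ n - 2
  · exact wit33A hn m1 m2 hA
  by_cases hE : n + 2 ≤ 2 * (m2 - m1).val
  · have hne : m2 ≠ m1 := by
      intro h; rw [h, sub_self, ZMod.val_zero] at hE; omega
    have hs := val_neg_sum hne
    obtain ⟨u, v, huv, h2, h1⟩ := wit33A hn m2 m1 (by omega)
    exact ⟨u, v, huv, h1, h2⟩
  have hd1 : (m2 - m1).val ≠ 0 := by omega
  have hvm : ((m2 - m1) - 1).val = (m2 - m1).val - 1 := by
    rw [val_sub_one (by omega), if_neg hd1]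
  have hvp : ((m2 - m1) + 1).val = (m2 - m1).val + 1 := by
    rw [val_add_one (by omega), if_neg (by omega)]
  by_cases hC : 2 * (m2 - m1).val = n
  · refine ⟨((3:Fin 4), m1 + 1), ((3:Fin 4), m1 - 1), ?_, ?_, ?_⟩
    · intro h; exact two_ne hn m1 (congrArg Prod.snd h)
    · rw [dist3 hn, dist3 hn, e3v]
      rw [show m1 - (m1 + 1) = -1 from by ring, show m1 - (m1 - 1) = 1 from by ring,
        val_one6 hn, val_neg_one6 hn]
      simp only [show (3:ℕ)-1 = 2 from rfl, show (3:ℕ)-2 = 1 from rfl, show (3:ℕ)-3 = 0 from rfl, FF0, FF1, FF2, FF3]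
      omega
    · rw [dist3 hn, dist3 hn, e3v]
      rw [show m2 - (m1 + 1) = (m2 - m1) - 1 from by ring,
        show m2 - (m1 - 1) = (m2 - m1) + 1 from by ring, hvm, hvp]
      simp only [show (3:ℕ)-1 = 2 from rfl, show (3:ℕ)-2 = 1 from rfl, show (3:ℕ)-3 = 0 from rfl, FF0, FF1, FF2, FF3]
      omega
  by_cases hB : 2 * (m2 - m1).val = n - 1
  · refine ⟨((1:Fin 4), m1 + 1), ((2:Fin 4), m1 - 1), by simp, ?_, ?_⟩
    · rw [dist3 hn, dist3 hn, e1v, e2v]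
      rw [show m1 - (m1 + 1) = -1 from by ring, show m1 - (m1 - 1) = 1 from by ring,
        val_one6 hn, val_neg_one6 hn]
      simp only [show (3:ℕ)-1 = 2 from rfl, show (3:ℕ)-2 = 1 from rfl, show (3:ℕ)-3 = 0 from rfl, FF0, FF1, FF2, FF3]
      omega
    · rw [dist3 hn, dist3 hn, e1v, e2v]
      rw [show m2 - (m1 + 1) = (m2 - m1) - 1 from by ring,
        show m2 - (m1 - 1) = (m2 - m1) + 1 from by ring, hvm, hvp]
      simp only [show (3:ℕ)-1 = 2 from rfl, show (3:ℕ)-2 = 1 from rfl, show (3:ℕ)-3 = 0 from rfl, FF0, FF1, FF2, FF3]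
      omega
  · have hD : 2 * (m2 - m1).val = n + 1 := by omega
    have hnd : (m1 - m2).val = n - (m2 - m1).val := by
      have hne : m2 ≠ m1 := by intro h; rw [h, sub_self, ZMod.val_zero] at hd1; omega
      have := val_neg_sum hne
      omega
    refine ⟨((1:Fin 4), m2 + 1), ((2:Fin 4), m2 - 1), by simp, ?_, ?_⟩
    · rw [dist3 hn, dist3 hn, e1v, e2v]
      have hu : (m1 - (m2 + 1)).val = n - (m2 - m1).val - 1 := by
        rw [show m1 - (m2 + 1) = (m1 - m2) - 1 from by ring, val_sub_one (by omega),
          if_neg (by omega), hnd]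
      have hv : (m1 - (m2 - 1)).val = n - (m2 - m1).val + 1 := by
        rw [show m1 - (m2 - 1) = (m1 - m2) + 1 from by ring, val_add_one (by omega),
          if_neg (by omega), hnd]
      rw [hu, hv]
      simp only [show (3:ℕ)-1 = 2 from rfl, show (3:ℕ)-2 = 1 from rfl, show (3:ℕ)-3 = 0 from rfl, FF0, FF1, FF2, FF3]
      omega
    · rw [dist3 hn, dist3 hn, e1v, e2v]
      rw [show m2 - (m2 + 1) = -1 from by ring, show m2 - (m2 - 1) = 1 from by ring,
        val_one6 hn, val_neg_one6 hn]
      simp only [show (3:ℕ)-1 = 2 from rfl, show (3:ℕ)-2 = 1 from rfl, show (3:ℕ)-3 = 0 from rfl, FF0, FF1, FF2, FF3]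
      omega

lemma wit03 (m1 m2 : ZMod n) :
    ∃ u v : Fin 4 × ZMod n, u ≠ v ∧
      (convexPolytopeS n).dist u ((0:Fin 4), m1) = (convexPolytopeS n).dist v ((0:Fin 4), m1) ∧
      (convexPolytopeS n).dist u ((3:Fin 4), m2) = (convexPolytopeS n).dist v ((3:Fin 4), m2) := by
  haveI : NeZero n := ⟨by omega⟩
  by_cases hi : m2 = m1
  · subst hi
    refine ⟨((1:Fin 4), m2 + 1), ((2:Fin 4), m2 - 1), by simp, ?_, ?_⟩
    · rw [dist0 hn, dist0 hn, e1v, e2v]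
      rw [show m2 + 1 - m2 = 1 from by ring, show m2 - 1 - m2 = -1 from by ring,
        val_one6 hn, val_neg_one6 hn]
      simp only [show (3:ℕ)-1 = 2 from rfl, show (3:ℕ)-2 = 1 from rfl, show (3:ℕ)-3 = 0 from rfl, FF0, FF1, FF2, FF3]
      omega
    · rw [dist3 hn, dist3 hn, e1v, e2v]
      rw [show m2 - (m2 + 1) = -1 from by ring, show m2 - (m2 - 1) = 1 from by ring,
        val_one6 hn, val_neg_one6 hn]
      simp only [show (3:ℕ)-1 = 2 from rfl, show (3:ℕ)-2 = 1 from rfl, show (3:ℕ)-3 = 0 from rfl, FF0, FF1, FF2, FF3]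
      omega
  by_cases hii : m2 = m1 - 1
  · subst hii
    refine ⟨((1:Fin 4), m1 - 1), ((2:Fin 4), m1), by simp, ?_, ?_⟩
    · rw [dist0 hn, dist0 hn, e1v, e2v]
      rw [show m1 - 1 - m1 = -1 from by ring, show m1 - m1 = 0 from by ring,
        val_neg_one6 hn, ZMod.val_zero]
      simp only [show (3:ℕ)-1 = 2 from rfl, show (3:ℕ)-2 = 1 from rfl, show (3:ℕ)-3 = 0 from rfl, FF0, FF1, FF2, FF3]
      omega
    · rw [dist3 hn, dist3 hn, e1v, e2v]
      rw [show m1 - 1 - (m1 - 1) = 0 from by ring, show m1 - 1 - m1 = -1 from by ring,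
        val_neg_one6 hn, ZMod.val_zero]
      simp only [show (3:ℕ)-1 = 2 from rfl, show (3:ℕ)-2 = 1 from rfl, show (3:ℕ)-3 = 0 from rfl, FF0, FF1, FF2, FF3]
      omega
  -- generic split case
  have hdlt := ZMod.val_lt (m2 - 1 - m1)
  have hA : (m2 - 1 - m1).val ≠ n - 1 := by
    intro h
    apply hi
    have h2 : m2 - 1 - m1 = ((n - 1 : ℕ) : ZMod n) := by rw [← h, cv]
    rw [cast_n_sub_one hn] at h2
    linear_combination h2
  have hB : (m2 - 1 - m1).val ≠ n - 2 := by
    intro h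
    apply hii
    have h2 : m2 - 1 - m1 = ((n - 2 : ℕ) : ZMod n) := by rw [← h, cv]
    rw [cast_n_sub_two hn] at h2
    linear_combination h2
  have he3 : (m2 - 1 - m1).val ≤ n - 3 := by omega
  refine ⟨((1:Fin 4), m1 + (((m2 - 1 - m1).val / 2 + 1 : ℕ) : ZMod n)),
          ((2:Fin 4), m1 + (((m2 - 1 - m1).val / 2 : ℕ) : ZMod n)), by simp, ?_, ?_⟩
  · rw [dist0 hn, dist0 hn, e1v, e2v]
    rw [show m1 + (((m2 - 1 - m1).val / 2 + 1 : ℕ) : ZMod n) - m1 =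
        (((m2 - 1 - m1).val / 2 + 1 : ℕ) : ZMod n) from by ring,
      show m1 + (((m2 - 1 - m1).val / 2 : ℕ) : ZMod n) - m1 =
        (((m2 - 1 - m1).val / 2 : ℕ) : ZMod n) from by ring,
      val_cast_lt (by omega), val_cast_lt (by omega)]
    simp only [show (3:ℕ)-1 = 2 from rfl, show (3:ℕ)-2 = 1 from rfl, show (3:ℕ)-3 = 0 from rfl, FF0, FF1, FF2, FF3]
    omega
  · rw [dist3 hn, dist3 hn, e1v, e2v]
    have hc1 : m2 - (m1 + (((m2 - 1 - m1).val / 2 + 1 : ℕ) : ZMod n)) =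
        (((m2 - 1 - m1).val - (m2 - 1 - m1).val / 2 : ℕ) : ZMod n) := by
      rw [Nat.cast_sub (by omega : (m2 - 1 - m1).val / 2 ≤ (m2 - 1 - m1).val), cv]
      push_cast
      ring
    have hc2 : m2 - (m1 + (((m2 - 1 - m1).val / 2 : ℕ) : ZMod n)) =
        (((m2 - 1 - m1).val - (m2 - 1 - m1).val / 2 + 1 : ℕ) : ZMod n) := by
      push_cast [Nat.cast_sub (by omega : (m2 - 1 - m1).val / 2 ≤ (m2 - 1 - m1).val), cv]
      ring
    rw [hc1, hc2, val_cast_lt (by omega), val_cast_lt (by omega)]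
    simp only [show (3:ℕ)-1 = 2 from rfl, show (3:ℕ)-2 = 1 from rfl, show (3:ℕ)-3 = 0 from rfl, FF0, FF1, FF2, FF3]
    omega

lemma pairwit (a b : Fin 4 × ZMod n) (ha : a.1 = 0 ∨ a.1 = 3) (hb : b.1 = 0 ∨ b.1 = 3) :
    ∃ u v : Fin 4 × ZMod n, u ≠ v ∧
      (convexPolytopeS n).dist u a = (convexPolytopeS n).dist v a ∧
      (convexPolytopeS n).dist u b = (convexPolytopeS n).dist v b := by
  obtain ⟨ra, ma⟩ := a
  obtain ⟨rb, mb⟩ := b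
  simp only at ha hb
  rcases ha with rfl | rfl <;> rcases hb with rfl | rfl
  · exact wit00 hn ma mb
  · exact wit03 hn ma mb
  · obtain ⟨u, v, huv, h1, h2⟩ := wit03 hn mb ma
    exact ⟨u, v, huv, h2, h1⟩
  · exact wit33 hn ma mb

end wits2

section upper

lemma FF_q {n : ℕ} (hn : 6 ≤ n) (r x : ℕ) (hr : r < 4) (hx : x < n) :
    FF n r (if n/2 ≤ x then x - n/2 else x + n - n/2) =
      if r ≤ 1 then (if n/2 ≤ x then x - n/2 else n/2 - x) + r
      else (if n/2 ≤ x then x - n/2 else n/2 - 1 - x) + r := by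
  simp only [FF]
  split_ifs <;> omega

set_option maxHeartbeats 1000000 in
lemma inj_key {n : ℕ} (hn : 6 ≤ n) (r s x y : ℕ) (hr : r < 4) (hs : s < 4)
    (hx : x < n) (hy : y < n)
    (e0 : FF n r x = FF n s y)
    (e1 : FF n r (if 1 ≤ x then x - 1 else x + n - 1) =
          FF n s (if 1 ≤ y then y - 1 else y + n - 1))
    (e2 : (if r ≤ 1 then (if n/2 ≤ x then x - n/2 else n/2 - x) + r
           else (if n/2 ≤ x then x - n/2 else n/2 - 1 - x) + r) =
          (if s ≤ 1 then (if n/2 ≤ y then y - n/2 else n/2 - y) + s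
           else (if n/2 ≤ y then y - n/2 else n/2 - 1 - y) + s)) :
    r = s ∧ x = y := by
  interval_cases r <;> interval_cases s <;>
    simp only [FF0, FF1, FF2, FF3] at e0 e1 <;>
    (try norm_num at e2) <;>
    (split_ifs at e1 e2 <;> omega)

lemma resolves {n : ℕ} (hn : 6 ≤ n) :
    IsResolving (convexPolytopeS n)
      {((0:Fin 4), (0:ZMod n)), ((0:Fin 4), (1:ZMod n)), ((0:Fin 4), ((n/2 : ℕ) : ZMod n))} := by
  haveI : NeZero n := ⟨by omega⟩
  have v1 : (1 : ZMod n).val = 1 := by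
    rw [← Nat.cast_one, val_cast_lt (by omega)]
  have vq : (((n/2 : ℕ) : ZMod n)).val = n / 2 := val_cast_lt (by omega)
  rintro ⟨r, l⟩ ⟨s, l'⟩ hne
  by_contra hcon
  push_neg at hcon
  have h0 := hcon ((0:Fin 4), (0:ZMod n)) (by simp)
  have h1 := hcon ((0:Fin 4), (1:ZMod n)) (by simp)
  have h2 := hcon ((0:Fin 4), ((n/2 : ℕ) : ZMod n)) (by simp)
  rw [dist0 hn, dist0 hn] at h0 h1 h2
  rw [sub_zero, sub_zero] at h0
  have hx : l.val < n := ZMod.val_lt l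
  have hy : l'.val < n := ZMod.val_lt l'
  rw [val_sub' l 1, val_sub' l' 1, v1] at h1
  rw [val_sub' l ((n/2 : ℕ) : ZMod n), val_sub' l' ((n/2 : ℕ) : ZMod n), vq] at h2
  rw [FF_q hn r.val l.val r.isLt hx, FF_q hn s.val l'.val s.isLt hy] at h2
  obtain ⟨her, hev⟩ := inj_key hn r.val s.val l.val l'.val r.isLt s.isLt hx hy h0 h1 h2
  apply hne
  have : r = s := Fin.ext her
  have hl : l = l' := by rw [← cv l, ← cv l', hev]
  rw [this, hl]

end upper

section final

lemma fin4cases : ∀ r : Fin 4, r = 0 ∨ r = 1 ∨ r = 2 ∨ r = 3 := by decide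

variable {n : ℕ} (hn : 6 ≤ n)
include hn

lemma not_small (R : Set (Fin 4 × ZMod n)) (hR : IsResolving (convexPolytopeS n) R)
    (hcard : R.ncard ≤ 2) : False := by
  haveI : NeZero n := ⟨by omega⟩
  have h3 : R.ncard = 0 ∨ R.ncard = 1 ∨ R.ncard = 2 := by omega
  rcases h3 with h | h | h
  · rw [Set.ncard_eq_zero (Set.toFinite R)] at h
    subst h
    have hdist : ((0:Fin 4), (0:ZMod n)) ≠ ((1:Fin 4), (0:ZMod n)) := by
      intro h
      have h2 : (0 : Fin 4) = 1 := congrArg Prod.fst h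
      exact absurd h2 (by decide)
    obtain ⟨w, hw, -⟩ := hR ((0:Fin 4), (0:ZMod n)) ((1:Fin 4), (0:ZMod n)) hdist
    simp at hw
  · obtain ⟨a, rfl⟩ := Set.ncard_eq_one.mp h
    obtain ⟨r0, l0⟩ := a
    obtain ⟨w, hw, hne⟩ := hR (r0, l0 + 1) (r0, l0 - 1)
      (fun h => two_ne hn l0 (congrArg Prod.snd h))
    simp only [Set.mem_singleton_iff] at hw
    subst hw
    apply hne
    have d3 : (convexPolytopeS n).dist (r0, l0 + 1) (r0, l0) = 1 := by
      rw [SimpleGraph.dist_comm]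
      exact dist_of_adj hn (adj_ring hn r0 l0)
    have d4 : (convexPolytopeS n).dist (r0, l0 - 1) (r0, l0) = 1 := by
      have h := adj_ring hn r0 (l0 - 1)
      rw [sub_add_cancel] at h
      exact dist_of_adj hn h
    rw [d3, d4]
  · obtain ⟨a, b, hab, rfl⟩ := Set.ncard_eq_two.mp h
    by_cases hamid : a.1 = 1 ∨ a.1 = 2
    · exact no_mid hn a b hamid hR
    by_cases hbmid : b.1 = 1 ∨ b.1 = 2
    · rw [Set.pair_comm] at hR
      exact no_mid hn b a hbmid hR
    have ha : a.1 = 0 ∨ a.1 = 3 := by have := fin4cases a.1; tauto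
    have hb : b.1 = 0 ∨ b.1 = 3 := by have := fin4cases b.1; tauto
    obtain ⟨u, v, huv, h1, h2⟩ := pairwit hn a b ha hb
    obtain ⟨w, hw, hne⟩ := hR u v huv
    simp only [Set.mem_insert_iff, Set.mem_singleton_iff] at hw
    rcases hw with rfl | rfl
    · exact hne h1
    · exact hne h2

lemma card3 : ({((0:Fin 4), (0:ZMod n)), ((0:Fin 4), (1:ZMod n)),
    ((0:Fin 4), ((n/2 : ℕ) : ZMod n))} : Set (Fin 4 × ZMod n)).ncard = 3 := by
  haveI : NeZero n := ⟨by omega⟩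
  have v1 := val_one6 hn
  have vq : (((n/2 : ℕ) : ZMod n)).val = n / 2 := val_cast_lt (by omega)
  apply Set.ncard_eq_three.mpr
  refine ⟨_, _, _, ?_, ?_, ?_, rfl⟩
  · intro h
    have h3 := congrArg ZMod.val (congrArg Prod.snd h)
    rw [ZMod.val_zero, v1] at h3
    omega
  · intro h
    have h3 := congrArg ZMod.val (congrArg Prod.snd h)
    rw [ZMod.val_zero, vq] at h3
    omega
  · intro h
    have h3 := congrArg ZMod.val (congrArg Prod.snd h)
    rw [v1, vq] at h3
    omega

lemma main_result : metricDim (convexPolytopeS n) = 3 := by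
  haveI : NeZero n := ⟨by omega⟩
  have hub : 3 ∈ {k | ∃ R : Set (Fin 4 × ZMod n),
      IsResolving (convexPolytopeS n) R ∧ R.ncard = k} :=
    ⟨_, resolves hn, card3 hn⟩
  have hmem := Nat.sInf_mem (⟨3, hub⟩ : Set.Nonempty _)
  obtain ⟨R, hR, hcard⟩ := hmem
  refine le_antisymm (Nat.sInf_le hub) ?_
  by_contra h
  push_neg at h
  exact not_small hn R hR (by unfold metricDim at h; omega)

end final


/-- For every integer `n ≥ 6`, the metric dimension of the
convex polytope `S_n` equals `3`. -/
theorem metricDim_convexPolytopeS (n : ℕ) (hn : 6 ≤ n) :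
    metricDim (convexPolytopeS n) = 3 :=
  main_result hn
end

section
/- Let Γ be a finite connected simple graph on n ≥ 3 vertices. Then Γ admits an independent fault-tolerant resolving set of cardinality 2 with ifr(Γ) = 2 if and only if Γ is isomorphic to the path graph P_n. -/
open SimpleGraph

section AuxLemmas

variable {V : Type*} {W : Type*}

/-- Graph isomorphisms preserve distances between reachable vertices. -/
lemma iso_dist_aux {G : SimpleGraph V} {G' : SimpleGraph W} (f : G ≃g G')
    (u v : V) (h : G.Reachable u v) : G'.dist (f u) (f v) = G.dist u v := by
  obtain ⟨p, hp⟩ := h.exists_walk_length_eq_dist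
  have h1 : G'.dist (f u) (f v) ≤ G.dist u v := by
    have := SimpleGraph.dist_le (p.map f.toHom)
    simpa [hp] using this
  have h2 : G.dist u v ≤ G'.dist (f u) (f v) := by
    have hr' : G'.Reachable (f u) (f v) := ⟨p.map f.toHom⟩
    obtain ⟨q, hq⟩ := hr'.exists_walk_length_eq_dist
    have := SimpleGraph.dist_le ((q.map f.symm.toHom).copy
      (f.symm_apply_apply u) (f.symm_apply_apply v))
    simpa [hq] using this
  omega

lemma pathGraph_walk_le {n : ℕ} {u v : Fin n} (p : (pathGraph n).Walk u v) :
    Nat.dist u.val v.val ≤ p.length := by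
  induction p with
  | nil => simp [Nat.dist_self]
  | @cons a b c h q ih =>
    rw [SimpleGraph.pathGraph_adj] at h
    have ht := Nat.dist.triangle_inequality a.val b.val c.val
    have hab : Nat.dist a.val b.val = 1 := by
      simp only [Nat.dist]; omega
    simp only [SimpleGraph.Walk.length_cons]
    omega

lemma pathGraph_walk_exists {n : ℕ} : ∀ (k : ℕ) (u v : Fin n),
    Nat.dist u.val v.val = k → ∃ p : (pathGraph n).Walk u v, p.length = k := by
  intro k
  induction k with
  | zero =>
    intro u v h
    have : u = v := Fin.ext (Nat.eq_of_dist_eq_zero h)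
    subst this
    exact ⟨SimpleGraph.Walk.nil, rfl⟩
  | succ k ih =>
    intro u v h
    rcases lt_or_ge u.val v.val with hlt | hle
    · have hx : u.val + 1 < n := lt_of_le_of_lt hlt v.isLt
      set x : Fin n := ⟨u.val + 1, hx⟩ with hxdef
      have hadj : (pathGraph n).Adj u x := by
        rw [SimpleGraph.pathGraph_adj]; left; rfl
      have hdx : Nat.dist x.val v.val = k := by
        simp only [Nat.dist] at h ⊢; have hxv : x.val = u.val + 1 := rfl; omega
      obtain ⟨q, hq⟩ := ih x v hdx
      exact ⟨SimpleGraph.Walk.cons hadj q, by simp [hq]⟩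
    · have hne : u.val ≠ v.val := by
        simp only [Nat.dist] at h; omega
      have hx : u.val - 1 < n := by omega
      set x : Fin n := ⟨u.val - 1, hx⟩ with hxdef
      have hadj : (pathGraph n).Adj u x := by
        rw [SimpleGraph.pathGraph_adj]; right; simp only [hxdef]; omega
      have hdx : Nat.dist x.val v.val = k := by
        simp only [Nat.dist] at h ⊢; have hxv : x.val = u.val - 1 := rfl; omega
      obtain ⟨q, hq⟩ := ih x v hdx
      exact ⟨SimpleGraph.Walk.cons hadj q, by simp [hq]⟩

lemma pathGraph_dist {n : ℕ} (u v : Fin n) :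
    (pathGraph n).dist u v = Nat.dist u.val v.val := by
  obtain ⟨p, hp⟩ := pathGraph_walk_exists (Nat.dist u.val v.val) u v rfl
  refine le_antisymm (hp ▸ SimpleGraph.dist_le p) ?_
  have hr : (pathGraph n).Reachable u v := ⟨p⟩
  obtain ⟨q, hq⟩ := hr.exists_walk_length_eq_dist
  calc Nat.dist u.val v.val ≤ q.length := pathGraph_walk_le q
    _ = _ := hq

/-- Step-down lemma: a vertex at positive distance from `a` has a neighbor one closer. -/
lemma exists_adj_dist_pred {G : SimpleGraph V} (hconn : G.Connected) (a v : V)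
    (h : G.dist v a ≠ 0) : ∃ x, G.Adj v x ∧ G.dist x a + 1 = G.dist v a := by
  obtain ⟨p, hp⟩ := (hconn.preconnected v a).exists_walk_length_eq_dist
  cases p with
  | nil => simp at h
  | @cons _ x _ hadj q =>
    refine ⟨x, hadj, ?_⟩
    have h1 : G.dist x a ≤ q.length := SimpleGraph.dist_le q
    have h2 : G.dist v a ≤ G.dist v x + G.dist x a := hconn.dist_triangle
    have h3 : G.dist v x = 1 := SimpleGraph.dist_eq_one_iff_adj.mpr hadj
    simp only [SimpleGraph.Walk.length_cons] at hp
    omega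

/-- A connected graph with a vertex whose distance function is injective
is isomorphic to the path graph. -/
lemma iso_of_inj [Fintype V] {G : SimpleGraph V} (hconn : G.Connected) (a : V)
    (hinj : Function.Injective fun v => G.dist v a) :
    Nonempty (G ≃g pathGraph (Fintype.card V)) := by
  have hlt : ∀ v, G.dist v a < Fintype.card V := by
    intro v
    obtain ⟨p, hp, hl⟩ := (hconn.preconnected v a).exists_path_of_dist
    exact hl ▸ hp.length_lt
  set f : V → Fin (Fintype.card V) := fun v => ⟨G.dist v a, hlt v⟩ with hf
  have hfinj : Function.Injective f := by
    intro u v h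
    exact hinj (congrArg Fin.val h)
  have hbij : Function.Bijective f :=
    (Fintype.bijective_iff_injective_and_card f).mpr ⟨hfinj, by simp⟩
  refine ⟨⟨Equiv.ofBijective f hbij, ?_⟩⟩
  intro u v
  simp only [Equiv.ofBijective_apply, pathGraph_adj, hf]
  constructor
  · rintro (h | h)
    · obtain ⟨x, hadj, hx⟩ := exists_adj_dist_pred hconn a v (by omega)
      have : x = u := hinj (by simp only []; omega)
      exact (this ▸ hadj).symm
    · obtain ⟨x, hadj, hx⟩ := exists_adj_dist_pred hconn a u (by omega)
      have : x = v := hinj (by simp only []; omega)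
      exact this ▸ hadj
  · intro hadj
    have h1 : G.dist u a ≤ G.dist u v + G.dist v a := hconn.dist_triangle
    have h2 : G.dist v a ≤ G.dist v u + G.dist u a := hconn.dist_triangle
    have h3 : G.dist u v = 1 := SimpleGraph.dist_eq_one_iff_adj.mpr hadj
    have h4 : G.dist v u = 1 := SimpleGraph.dist_eq_one_iff_adj.mpr hadj.symm
    have h5 : G.dist u a ≠ G.dist v a := fun h => hadj.ne (hinj h)
    omega

end AuxLemmas

/-- A finite connected graph on `n ≥ 3` vertices admits an independent
fault-tolerant resolving set of cardinality `2` with `ifr(Γ) = 2` if and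
only if it is isomorphic to the path graph `P_n`. -/
theorem ifr_eq_two_iff_pathGraph {V : Type*} [Fintype V] (G : SimpleGraph V)
    (hcard : 3 ≤ Fintype.card V) (hconn : G.Connected) :
    ((∃ R : Set V, IsIFTResolving G R ∧ R.ncard = 2) ∧ ifr G = 2) ↔
      Nonempty (G ≃g SimpleGraph.pathGraph (Fintype.card V)) := by
  constructor
  · rintro ⟨⟨R, ⟨⟨hres, hft⟩, hind⟩, hR2⟩, -⟩
    obtain ⟨a, b, hab, rfl⟩ := Set.ncard_eq_two.mp hR2
    have hresa : IsResolving G ({a, b} \ {b}) := hft b (by simp)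
    have hinj : Function.Injective fun v => G.dist v a := by
      intro u v h
      by_contra hne
      obtain ⟨w, hw, hdw⟩ := hresa u v hne
      have hwa : w = a := by
        rcases hw with ⟨hw1, hw2⟩
        simp only [Set.mem_insert_iff, Set.mem_singleton_iff] at hw1 hw2
        tauto
      exact hdw (by rw [hwa]; exact h)
    exact iso_of_inj hconn a hinj
  · rintro ⟨e⟩
    have hdist : ∀ (v : V) (i : Fin (Fintype.card V)),
        G.dist v (e.symm i) = Nat.dist (e v).val i.val := by
      intro v i
      have h := iso_dist_aux e v (e.symm i) (hconn.preconnected v (e.symm i))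
      rw [e.apply_symm_apply] at h
      rw [← h, pathGraph_dist]
    set z : Fin (Fintype.card V) := ⟨0, by omega⟩ with hzdef
    set l : Fin (Fintype.card V) := ⟨Fintype.card V - 1, by omega⟩ with hldef
    have hzl : z ≠ l := by
      intro h
      have := congrArg Fin.val h
      simp only [hzdef, hldef] at this
      omega
    set a := e.symm z with hadef
    set b := e.symm l with hbdef
    have hab : a ≠ b := fun h => hzl (e.symm.injective h)
    have hra : ∀ u v : V, u ≠ v → G.dist u a ≠ G.dist v a := by
      intro u v huv
      rw [hadef, hdist, hdist]
      have hne : (e u).val ≠ (e v).val := fun h => huv (e.injective (Fin.ext h))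
      simp only [Nat.dist, hzdef]
      omega
    have hrb : ∀ u v : V, u ≠ v → G.dist u b ≠ G.dist v b := by
      intro u v huv
      rw [hbdef, hdist, hdist]
      have hne : (e u).val ≠ (e v).val := fun h => huv (e.injective (Fin.ext h))
      have h1 := (e u).isLt
      have h2 := (e v).isLt
      simp only [Nat.dist, hldef]
      omega
    have hres : IsResolving G {a, b} := fun u v huv =>
      ⟨a, by simp, hra u v huv⟩
    have hft : ∀ w ∈ ({a, b} : Set V), IsResolving G (({a, b} : Set V) \ {w}) := by
      intro w hw
      rcases hw with hw | hw
      · subst hw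
        exact fun u v huv => ⟨b, ⟨by simp, by simp [hab.symm]⟩, hrb u v huv⟩
      · simp only [Set.mem_singleton_iff] at hw
        subst hw
        exact fun u v huv => ⟨a, ⟨by simp, by simp [hab]⟩, hra u v huv⟩
    have hind : _root_.IsIndepSet G {a, b} := by
      intro u hu v hv hadj
      have hnadj : ¬ G.Adj a b := by
        intro h
        have hP : (SimpleGraph.pathGraph (Fintype.card V)).Adj (e a) (e b) :=
          e.map_rel_iff.mpr h
        rw [hadef, hbdef, e.apply_symm_apply, e.apply_symm_apply,
          SimpleGraph.pathGraph_adj] at hP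
        have hz0 : z.val = 0 := rfl
        have hl0 : l.val = Fintype.card V - 1 := rfl
        rw [hz0, hl0] at hP
        omega
      rcases hu with hu | hu <;> rcases hv with hv | hv <;>
        subst hu <;> subst hv
      · exact hadj.ne rfl
      · exact hnadj hadj
      · exact hnadj hadj.symm
      · exact hadj.ne rfl
    have h2mem : 2 ∈ {k | ∃ R : Set V, IsIFTResolving G R ∧ R.ncard = k} :=
      ⟨{a, b}, ⟨⟨hres, hft⟩, hind⟩, Set.ncard_pair hab⟩
    refine ⟨⟨{a, b}, ⟨⟨hres, hft⟩, hind⟩, Set.ncard_pair hab⟩, ?_⟩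
    have hlb : ∀ k ∈ {k | ∃ R : Set V, IsIFTResolving G R ∧ R.ncard = k}, 2 ≤ k := by
      rintro k ⟨R, ⟨⟨hres', hft'⟩, hind'⟩, hk⟩
      by_contra hlt
      push_neg at hlt
      obtain ⟨u, v, huv⟩ := (Fintype.one_lt_card_iff (α := V)).mp (by omega)
      interval_cases k
      · have hRe : R = ∅ := (Set.ncard_eq_zero (Set.toFinite R)).mp hk
        obtain ⟨w, hw, -⟩ := hres' u v huv
        rw [hRe] at hw
        exact hw
      · obtain ⟨w, rfl⟩ := Set.ncard_eq_one.mp hk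
        obtain ⟨w', hw', -⟩ := hft' w rfl u v huv
        simp at hw'
    exact le_antisymm (Nat.sInf_le h2mem) (le_csInf ⟨2, h2mem⟩ hlb)
end

section
/- For every integer n ≥ 6, the cycle graph C_n admits an independent fault-tolerant resolving set and ifr(C_n) = 3. -/
open SimpleGraph

/-- The cycle graph `C_n` on vertex set `ZMod n`, where the vertex
`(i : ZMod n)` represents `v^{i+1}`, with `vⁱ` adjacent to `vⁱ⁺¹`. -/
def cycleGraphZMod (n : ℕ) : SimpleGraph (ZMod n) :=
  SimpleGraph.fromRel (fun u v => v = u + 1)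

section CycleAux

variable {n : ℕ}

lemma val_one_zmod [NeZero n] (hn : 2 ≤ n) : (1 : ZMod n).val = 1 := by
  haveI : Fact (1 < n) := ⟨by omega⟩
  exact ZMod.val_one n

lemma cyc_adj (u v : ZMod n) :
    (cycleGraphZMod n).Adj u v ↔ u ≠ v ∧ (v = u + 1 ∨ u = v + 1) := by
  simp [cycleGraphZMod, SimpleGraph.fromRel_adj]

lemma one_ne_zero_zmod [NeZero n] (hn : 2 ≤ n) : (1 : ZMod n) ≠ 0 := by
  have h := val_one_zmod hn
  intro h0; rw [h0] at h; simp at h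

lemma cyc_adj_succ [NeZero n] (hn : 2 ≤ n) (u : ZMod n) :
    (cycleGraphZMod n).Adj u (u + 1) := by
  rw [cyc_adj]
  refine ⟨?_, Or.inl rfl⟩
  intro h
  have : (1 : ZMod n) = 0 := by linear_combination -h
  exact one_ne_zero_zmod hn this

/-- Distance candidate for the cycle graph. -/
def cycD (n : ℕ) (u w : ZMod n) : ℕ := min (u - w).val (n - (u - w).val)

lemma walk_exists [NeZero n] (hn : 2 ≤ n) (u : ZMod n) (k : ℕ) :
    ∃ p : (cycleGraphZMod n).Walk u (u + (k : ZMod n)), p.length = k := by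
  induction k with
  | zero => exact ⟨Walk.nil.copy rfl (by simp), by simp⟩
  | succ k ih =>
    obtain ⟨p, hp⟩ := ih
    refine ⟨(p.concat (cyc_adj_succ hn _)).copy rfl (by push_cast; ring), ?_⟩
    simp [hp]

lemma dist_le_val [NeZero n] (hn : 2 ≤ n) (u w : ZMod n) :
    (cycleGraphZMod n).dist u w ≤ (w - u).val := by
  obtain ⟨p, hp⟩ := walk_exists hn u (w - u).val
  have he : u + (((w - u).val : ℕ) : ZMod n) = w := by
    rw [ZMod.natCast_val, ZMod.cast_id]; ring
  have := SimpleGraph.dist_le (p.copy rfl he)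
  simpa [hp] using this

lemma cyc_reachable [NeZero n] (hn : 2 ≤ n) (u w : ZMod n) :
    (cycleGraphZMod n).Reachable u w := by
  obtain ⟨p, _⟩ := walk_exists hn u (w - u).val
  have he : u + (((w - u).val : ℕ) : ZMod n) = w := by
    rw [ZMod.natCast_val, ZMod.cast_id]; ring
  exact ⟨p.copy rfl he⟩

lemma cycD_step [NeZero n] (hn : 2 ≤ n) (y w : ZMod n) :
    cycD n y w ≤ cycD n (y + 1) w + 1 ∧ cycD n (y + 1) w ≤ cycD n y w + 1 := by
  set k := (y - w).val with hk
  have hklt : k < n := ZMod.val_lt _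
  have h1 : (y + 1 - w) = (y - w) + 1 := by ring
  have hv : (y + 1 - w).val = (k + 1) % n := by
    rw [h1, ZMod.val_add, val_one_zmod hn]
  unfold cycD
  rw [← hk, hv]
  rcases eq_or_lt_of_le (Nat.succ_le_of_lt hklt) with h | h
  · rw [← h, Nat.mod_self]; omega
  · rw [Nat.mod_eq_of_lt h]; omega

lemma cycD_le_walk [NeZero n] (hn : 2 ≤ n) (w u : ZMod n)
    (p : (cycleGraphZMod n).Walk u w) : cycD n u w ≤ p.length := by
  induction p with
  | nil => unfold cycD; simp
  | @cons a b c hadj q ih =>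
    rw [cyc_adj] at hadj
    rcases hadj.2 with h | h
    · subst h
      have := (cycD_step hn a c).1
      simp only [Walk.length_cons]
      omega
    · subst h
      have := (cycD_step hn b c).2
      simp only [Walk.length_cons]
      omega

lemma cyc_dist_eq [NeZero n] (hn : 2 ≤ n) (u w : ZMod n) :
    (cycleGraphZMod n).dist u w = cycD n u w := by
  apply le_antisymm
  · rcases eq_or_ne u w with rfl | huw
    · unfold cycD; simp
    · have h1 : (cycleGraphZMod n).dist u w ≤ (w - u).val := dist_le_val hn u w
      have h2 : (cycleGraphZMod n).dist u w ≤ (u - w).val := by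
        rw [SimpleGraph.dist_comm]; exact dist_le_val hn w u
      have hne : (u - w) ≠ 0 := sub_ne_zero.mpr huw
      have : (w - u).val = n - (u - w).val := by
        have h3 : w - u = -(u - w) := by ring
        rw [h3, ZMod.neg_val, if_neg hne]
      unfold cycD; omega
  · obtain ⟨p, hp⟩ := (cyc_reachable hn u w).exists_walk_length_eq_dist
    rw [← hp]
    exact cycD_le_walk hn w u p

/-- Two vertices `a`, `b` with `a + a ≠ b + b` distinguish every pair. -/
lemma two_points_resolve [NeZero n] (hn : 2 ≤ n) (a b u v : ZMod n)
    (hab : a + a ≠ b + b) (huv : u ≠ v)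
    (hA : (cycleGraphZMod n).dist u a = (cycleGraphZMod n).dist v a)
    (hB : (cycleGraphZMod n).dist u b = (cycleGraphZMod n).dist v b) : False := by
  have key : ∀ w : ZMod n,
      (cycleGraphZMod n).dist u w = (cycleGraphZMod n).dist v w → u + v = w + w := by
    intro w hw
    rw [cyc_dist_eq hn, cyc_dist_eq hn] at hw
    unfold cycD at hw
    have hp : (u - w).val < n := ZMod.val_lt _
    have hq : (v - w).val < n := ZMod.val_lt _
    have hcases : (u - w).val = (v - w).val ∨ (u - w).val + (v - w).val = n := by omega
    rcases hcases with h | h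
    · have heq : u - w = v - w := ZMod.val_injective n h
      exact absurd (by linear_combination heq) huv
    · have h0 : ((u - w) + (v - w)).val = 0 := by
        rw [ZMod.val_add, h, Nat.mod_self]
      have h0' : (u - w) + (v - w) = 0 := (ZMod.val_eq_zero _).mp h0
      linear_combination h0'
  have ha := key a hA
  have hb := key b hB
  exact hab (by rw [← ha, ← hb])

lemma resolving_of_pair [NeZero n] (hn : 2 ≤ n) (R : Set (ZMod n)) (a b : ZMod n)
    (ha : a ∈ R) (hb : b ∈ R) (hab : a + a ≠ b + b) :
    IsResolving (cycleGraphZMod n) R := by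
  intro u v huv
  by_contra hc
  push_neg at hc
  exact two_points_resolve hn a b u v hab huv (hc a ha) (hc b hb)

lemma natCast_ne_zmod (hn : 2 ≤ n) (a b : ℕ) (ha : a < n) (hb : b < n) (hne : a ≠ b) :
    (a : ZMod n) ≠ (b : ZMod n) := by
  haveI : NeZero n := ⟨by omega⟩
  intro h
  apply hne
  have := congrArg ZMod.val h
  rwa [ZMod.val_cast_of_lt ha, ZMod.val_cast_of_lt hb] at this

lemma sub_natCast_zmod (a b : ℕ) (hab : a ≤ b) :
    (b : ZMod n) - (a : ZMod n) = ((b - a : ℕ) : ZMod n) := by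
  have hb : (b : ℕ) = (b - a) + a := by omega
  conv_lhs => rw [hb]
  push_cast
  ring

lemma nonadj_of_diff (hn : 2 ≤ n) (a b : ℕ) (hab : a < b) (hb : b < n)
    (h1 : b - a ≠ 1) (h2 : n - (b - a) ≠ 1) :
    ¬ (cycleGraphZMod n).Adj (a : ZMod n) (b : ZMod n) := by
  haveI : NeZero n := ⟨by omega⟩
  rw [cyc_adj]
  rintro ⟨hne, h | h⟩
  · have hd : ((b - a : ℕ) : ZMod n) = 1 := by
      rw [← sub_natCast_zmod a b hab.le, h]; ring
    have := congrArg ZMod.val hd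
    rw [ZMod.val_cast_of_lt (by omega), val_one_zmod hn] at this
    exact h1 this
  · have hd : -((b - a : ℕ) : ZMod n) = 1 := by
      rw [← sub_natCast_zmod a b hab.le]
      rw [h]; ring
    have hne0 : ((b - a : ℕ) : ZMod n) ≠ 0 := by
      intro h0
      have := congrArg ZMod.val h0
      rw [ZMod.val_cast_of_lt (by omega)] at this
      simp at this
      omega
    have := congrArg ZMod.val hd
    rw [ZMod.neg_val, if_neg hne0, ZMod.val_cast_of_lt (by omega), val_one_zmod hn] at this
    exact h2 this

lemma twice_ne_of_diff (hn : 2 ≤ n) (a b : ℕ) (hab : a < b) (hb : b < n)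
    (h : 2 * (b - a) ≠ n) :
    (a : ZMod n) + (a : ZMod n) ≠ (b : ZMod n) + (b : ZMod n) := by
  haveI : NeZero n := ⟨by omega⟩
  intro heq
  have hd : ((2 * (b - a) : ℕ) : ZMod n) = 0 := by
    push_cast [Nat.cast_sub hab.le]
    linear_combination -heq
  have := congrArg ZMod.val hd
  rw [ZMod.val_natCast] at this
  simp only [ZMod.val_zero] at this
  rcases lt_or_ge (2 * (b - a)) n with hlt | hge
  · rw [Nat.mod_eq_of_lt hlt] at this; omega
  · have h2 : 2 * (b - a) - n < n := by omega
    rw [Nat.mod_eq_sub_mod hge, Nat.mod_eq_of_lt h2] at this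
    omega

/-- Main construction lemma: any triple with suitable gaps is an IFTRS of size 3. -/
lemma triple_good (hn : 6 ≤ n) (a b c : ℕ) (hab : a < b) (hbc : b < c) (hcn : c < n)
    (d1a : 2 ≤ b - a) (d1b : b - a + 2 ≤ n) (d1c : 2 * (b - a) ≠ n)
    (d2a : 2 ≤ c - b) (d2b : c - b + 2 ≤ n) (d2c : 2 * (c - b) ≠ n)
    (d3a : 2 ≤ c - a) (d3b : c - a + 2 ≤ n) (d3c : 2 * (c - a) ≠ n) :
    IsIFTResolving (cycleGraphZMod n)
      ({(a : ZMod n), (b : ZMod n), (c : ZMod n)} : Set (ZMod n)) ∧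
    ({(a : ZMod n), (b : ZMod n), (c : ZMod n)} : Set (ZMod n)).ncard = 3 := by
  haveI : NeZero n := ⟨by omega⟩
  have h2n : 2 ≤ n := by omega
  set A : ZMod n := (a : ZMod n)
  set B : ZMod n := (b : ZMod n)
  set C : ZMod n := (c : ZMod n)
  have hAB : A ≠ B := natCast_ne_zmod h2n a b (by omega) (by omega) (by omega)
  have hAC : A ≠ C := natCast_ne_zmod h2n a c (by omega) (by omega) (by omega)
  have hBC : B ≠ C := natCast_ne_zmod h2n b c (by omega) (by omega) (by omega)
  have t1 : A + A ≠ B + B := twice_ne_of_diff h2n a b hab (by omega) d1c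
  have t2 : B + B ≠ C + C := twice_ne_of_diff h2n b c hbc (by omega) d2c
  have t3 : A + A ≠ C + C := twice_ne_of_diff h2n a c (hab.trans hbc) (by omega) d3c
  set R : Set (ZMod n) := {A, B, C} with hR
  have memA : A ∈ R := by simp [hR]
  have memB : B ∈ R := by simp [hR]
  have memC : C ∈ R := by simp [hR]
  refine ⟨⟨⟨resolving_of_pair h2n R A B memA memB t1, ?_⟩, ?_⟩, ?_⟩
  · -- fault tolerance
    intro w hw
    rcases (by simpa [hR] using hw : w = A ∨ w = B ∨ w = C) with rfl | rfl | rfl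
    · exact resolving_of_pair h2n _ B C ⟨memB, hAB.symm⟩ ⟨memC, hAC.symm⟩ t2
    · exact resolving_of_pair h2n _ A C ⟨memA, hAB⟩ ⟨memC, hBC.symm⟩ t3
    · exact resolving_of_pair h2n _ A B ⟨memA, hAC⟩ ⟨memB, hBC⟩ t1
  · -- independence
    have nAB := nonadj_of_diff h2n a b hab (by omega) (by omega) (by omega)
    have nBC := nonadj_of_diff h2n b c hbc (by omega) (by omega) (by omega)
    have nAC := nonadj_of_diff h2n a c (hab.trans hbc) (by omega) (by omega) (by omega)
    intro u hu v hv hadj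
    rcases (by simpa [hR] using hu : u = A ∨ u = B ∨ u = C) with rfl | rfl | rfl <;>
      rcases (by simpa [hR] using hv : v = A ∨ v = B ∨ v = C) with rfl | rfl | rfl
    · exact (cycleGraphZMod n).loopless.irrefl _ hadj
    · exact nAB hadj
    · exact nAC hadj
    · exact nAB hadj.symm
    · exact (cycleGraphZMod n).loopless.irrefl _ hadj
    · exact nBC hadj
    · exact nAC hadj.symm
    · exact nBC hadj.symm
    · exact (cycleGraphZMod n).loopless.irrefl _ hadj
  · -- cardinality
    rw [hR, Set.ncard_insert_of_notMem (by simp [hAB, hAC]) (Set.toFinite _),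
      Set.ncard_pair hBC]

/-- No set of at most one vertex resolves the cycle. -/
lemma not_resolving_small (hn : 6 ≤ n) (R : Set (ZMod n)) (hR : R.ncard ≤ 1) :
    ¬ IsResolving (cycleGraphZMod n) R := by
  haveI : NeZero n := ⟨by omega⟩
  have h2n : 2 ≤ n := by omega
  intro h
  rcases R.eq_empty_or_nonempty with rfl | ⟨w, hw⟩
  · obtain ⟨w, hw, _⟩ := h 0 1 (by
      have := natCast_ne_zmod h2n 0 1 (by omega) (by omega) (by omega)
      simpa using this)
    exact hw
  · have hsingle : ∀ x ∈ R, x = w := by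
      intro x hx
      exact (Set.ncard_le_one (Set.toFinite _)).mp hR x hx w hw
    have huv : w + 1 ≠ w - 1 := by
      intro he
      have h2 : ((2 : ℕ) : ZMod n) = 0 := by push_cast; linear_combination he
      have := congrArg ZMod.val h2
      rw [ZMod.val_cast_of_lt (by omega)] at this
      simp at this
    obtain ⟨w', hw', hne⟩ := h (w + 1) (w - 1) huv
    have hw'w : w' = w := hsingle w' hw'
    rw [hw'w] at hne
    apply hne
    rw [cyc_dist_eq h2n, cyc_dist_eq h2n]
    unfold cycD
    have e1 : (w + 1 - w) = (1 : ZMod n) := by ring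
    have e2 : (w - 1 - w) = (-1 : ZMod n) := by ring
    rw [e1, e2, ZMod.neg_val, if_neg (one_ne_zero_zmod h2n), val_one_zmod h2n]
    omega

end CycleAux

/-- For every integer `n ≥ 6`, the cycle `C_n` admits an independent
fault-tolerant resolving set and `ifr(C_n) = 3`. -/
theorem ifr_cycleGraph (n : ℕ) (hn : 6 ≤ n) :
    (∃ R : Set (ZMod n), IsIFTResolving (cycleGraphZMod n) R) ∧
      ifr (cycleGraphZMod n) = 3 := by
  haveI : NeZero n := ⟨by omega⟩
  have hex : ∃ R : Set (ZMod n), IsIFTResolving (cycleGraphZMod n) R ∧ R.ncard = 3 := by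
    rcases eq_or_ne n 8 with rfl | h8
    · exact ⟨_, triple_good (by omega) 0 2 5 (by omega) (by omega) (by omega)
        (by omega) (by omega) (by omega) (by omega) (by omega) (by omega)
        (by omega) (by omega) (by omega)⟩
    · exact ⟨_, triple_good hn 0 2 4 (by omega) (by omega) (by omega)
        (by omega) (by omega) (by omega) (by omega) (by omega) (by omega)
        (by omega) (by omega) (by omega)⟩
  obtain ⟨R, hR, hcard⟩ := hex
  refine ⟨⟨R, hR⟩, ?_⟩
  apply le_antisymm
  · exact Nat.sInf_le ⟨R, hR, hcard⟩
  · refine le_csInf ⟨3, R, hR, hcard⟩ ?_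
    rintro k ⟨S, hS, rfl⟩
    by_contra hk
    push_neg at hk
    rcases Nat.lt_or_ge S.ncard 2 with h2 | h2
    · exact not_resolving_small hn S (by omega) hS.1.1
    · have hne : S.Nonempty := Set.nonempty_of_ncard_ne_zero (by omega)
      obtain ⟨w, hw⟩ := hne
      have hres := hS.1.2 w hw
      have hc : (S \ {w}).ncard ≤ 1 := by
        rw [Set.ncard_diff_singleton_of_mem hw]
        omega
      exact not_resolving_small hn _ hc hres
end

section
/- Let Γ be a finite connected simple graph and let D be a set of at least 2 vertices of Γ that are pairwise distance similar. Then every fault-tolerant resolving set of Γ contains all the vertices of D. -/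
open SimpleGraph

/-- Two vertices `u` and `v` are distance similar in `G` if
`d(x,u) = d(x,v)` for every vertex `x ∉ {u, v}`. -/
def DistSimilar {V : Type*} (G : SimpleGraph V) (u v : V) : Prop :=
  ∀ x : V, x ≠ u → x ≠ v → G.dist x u = G.dist x v

/-- If `D` is a set of at least two pairwise distance-similar vertices of a
finite connected graph `Γ`, then every fault-tolerant resolving set of `Γ`
contains all the vertices of `D`. -/
theorem distSimilar_subset_FTRS {V : Type*} [Fintype V] (G : SimpleGraph V)
    (hconn : G.Connected) (D : Set V) (hD : 2 ≤ D.ncard)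
    (hsim : ∀ u ∈ D, ∀ v ∈ D, DistSimilar G u v) :
    ∀ R : Set V, IsFTResolving G R → D ⊆ R := by
  intro R hR u hu
  by_contra hun
  obtain ⟨v, hv, hvu⟩ := Set.exists_ne_of_one_lt_ncard (show 1 < D.ncard by omega) u
  have key : ∀ w, w ≠ u → w ≠ v → G.dist u w = G.dist v w := by
    intro w hwu hwv
    rw [SimpleGraph.dist_comm (u := u) (v := w), SimpleGraph.dist_comm (u := v) (v := w)]
    exact hsim u hu v hv w hwu hwv
  by_cases hvR : v ∈ R
  · obtain ⟨w, hw, hne⟩ := hR.2 v hvR u v hvu.symm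
    exact hne (key w (fun h => hun (h ▸ hw.1)) hw.2)
  · obtain ⟨w, hw, hne⟩ := hR.1 u v hvu.symm
    exact hne (key w (fun h => hun (h ▸ hw)) (fun h => hvR (h ▸ hw)))
end

section
/- Let Γ be a finite connected simple graph and let D be a set of at least 3 pairwise distance-similar vertices of Γ such that D is not an independent set (some two vertices of D are adjacent). Then Γ has no independent fault-tolerant resolving set, i.e., ifr(Γ) is not defined. -/
open SimpleGraph

/-- If `D` is a set of at least three pairwise distance-similar vertices of a
finite connected graph `Γ` and `D` is not independent, then `Γ` has no
independent fault-tolerant resolving set. -/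
theorem no_IFTRS_of_distSimilar_not_indep {V : Type*} [Fintype V]
    (G : SimpleGraph V) (hconn : G.Connected) (D : Set V) (hD : 3 ≤ D.ncard)
    (hsim : ∀ u ∈ D, ∀ v ∈ D, DistSimilar G u v)
    (hnotindep : ¬ _root_.IsIndepSet G D) :
    ¬ ∃ R : Set V, IsIFTResolving G R := by
  rintro ⟨R, ⟨⟨hres, hft⟩, hind⟩⟩
  obtain ⟨a, ha, b, hb, hab⟩ : ∃ a ∈ D, ∃ b ∈ D, G.Adj a b := by
    by_contra h; push_neg at h; exact hnotindep h
  have key : ∀ u v : V, u ≠ v → DistSimilar G u v → u ∈ R := by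
    intro u v huv hsim'
    by_contra hu
    obtain ⟨w, hwR, hw⟩ := hres u v huv
    have hwv : w = v := by
      by_contra hwv
      have hwu : w ≠ u := fun h => hu (h ▸ hwR)
      exact hw (by rw [show G.dist u w = G.dist w u from G.dist_comm, show G.dist v w = G.dist w v from G.dist_comm]; exact hsim' w hwu hwv)
    subst hwv
    obtain ⟨w', hw', hww'⟩ := hft w hwR u w huv
    have h1 : w' ≠ u := fun h => hu (h ▸ hw'.1)
    have h2 : w' ≠ w := hw'.2
    exact hww' (by rw [show G.dist u w' = G.dist w' u from G.dist_comm, show G.dist w w' = G.dist w' w from G.dist_comm]; exact hsim' w' h1 h2)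
  have haR : a ∈ R := key a b hab.ne (hsim a ha b hb)
  have hbR : b ∈ R := key b a hab.ne' (hsim b hb a ha)
  exact hind a haR b hbR hab
end

section
/- The complete bipartite graph K_{3,3} has no independent fault-tolerant resolving set; that is, ifr(K_{3,3}) is not defined. -/
open SimpleGraph

/-- The complete bipartite graph `K_{3,3}` has no independent fault-tolerant
resolving set. -/
theorem no_IFTRS_completeBipartite33 :
    ¬ ∃ R : Set (Fin 3 ⊕ Fin 3),
        IsIFTResolving (completeBipartiteGraph (Fin 3) (Fin 3)) R := by
  rintro ⟨R, ⟨⟨hres, -⟩, hind⟩⟩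
  by_cases h : ∃ a : Fin 3, Sum.inr a ∈ R
  · obtain ⟨a, ha⟩ := h
    obtain ⟨w, hw, hd⟩ := hres (Sum.inl 0) (Sum.inl 1) (by simp)
    obtain b | b := w
    · exact hind _ hw _ ha (by simp)
    · apply hd
      rw [SimpleGraph.dist_eq_one_iff_adj.2 (by simp),
        SimpleGraph.dist_eq_one_iff_adj.2 (by simp)]
  · obtain ⟨w, hw, hd⟩ := hres (Sum.inr 0) (Sum.inr 1) (by simp)
    obtain b | b := w
    · apply hd
      rw [SimpleGraph.dist_eq_one_iff_adj.2 (by simp),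
        SimpleGraph.dist_eq_one_iff_adj.2 (by simp)]
    · exact h ⟨b, hw⟩
end

section
/- The 3-dimensional hypercube graph Q_3 admits an independent fault-tolerant resolving set and ifr(Q_3) = 4. -/
open SimpleGraph

/-- The 3-dimensional hypercube graph `Q₃`: vertices are binary triples,
adjacent if and only if they differ in exactly one coordinate. -/
def hypercubeQ3 : SimpleGraph (Fin 3 → Fin 2) :=
  SimpleGraph.fromRel (fun p q =>
    (Finset.univ.filter (fun i => p i ≠ q i)).card = 1)


section IFRProof

abbrev V3 := Fin 3 → Fin 2

def Hd (u v : V3) : ℕ := (Finset.univ.filter (fun i => u i ≠ v i)).card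

lemma Hd_self (u : V3) : Hd u u = 0 := by simp [Hd]

lemma Hd_eq_zero {u v : V3} (h : Hd u v = 0) : u = v := by
  funext i
  by_contra hne
  have : i ∈ Finset.univ.filter (fun i => u i ≠ v i) := by simp [hne]
  simp [Hd, Finset.card_eq_zero] at h
  exact hne (@h i)

lemma Hd_comm (u v : V3) : Hd u v = Hd v u := by
  unfold Hd; congr 1; ext i; simp [ne_comm]

lemma adj_iff_s19 {u v : V3} : hypercubeQ3.Adj u v ↔ Hd u v = 1 := by
  constructor
  · rintro ⟨hne, h | h⟩
    · exact h
    · rw [Hd_comm]; exact h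
  · intro h
    refine ⟨fun he => by simp [he, Hd_self] at h, Or.inl h⟩

lemma Hd_triangle (u w v : V3) : Hd u v ≤ Hd u w + Hd w v := by
  unfold Hd
  refine le_trans (Finset.card_le_card ?_) (Finset.card_union_le _ _)
  intro i hi
  simp only [Finset.mem_filter, Finset.mem_union, Finset.mem_univ, true_and] at *
  by_contra hc
  push_neg at hc
  exact hi (hc.1.trans hc.2)

lemma Hd_le_walk {u v : V3} (p : hypercubeQ3.Walk u v) : Hd u v ≤ p.length := by
  induction p with
  | nil => simp [Hd_self]
  | cons h p ih =>
    rename_i a b c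
    have h1 : Hd a b = 1 := adj_iff_s19.mp h
    calc Hd a c ≤ Hd a b + Hd b c := Hd_triangle a b c
    _ ≤ 1 + p.length := by omega
    _ = (SimpleGraph.Walk.cons h p).length := by simp [SimpleGraph.Walk.length_cons]; omega

lemma exists_walk (u v : V3) : ∃ p : hypercubeQ3.Walk u v, p.length = Hd u v := by
  generalize hn : Hd u v = n
  induction n generalizing u with
  | zero =>
    cases Hd_eq_zero hn
    exact ⟨SimpleGraph.Walk.nil, by simp [Hd_self]⟩
  | succ n ih =>
    have hne : u ≠ v := fun he => by rw [he, Hd_self] at hn; omega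
    have : (Finset.univ.filter (fun i => u i ≠ v i)).Nonempty := by
      rw [← Finset.card_pos]
      have := hn; simp only [Hd] at this; omega
    obtain ⟨i, hi⟩ := this
    simp only [Finset.mem_filter] at hi
    set u' := Function.update u i (v i) with hu'
    have h1 : Hd u u' = 1 := by
      rw [show (1:ℕ) = ({i} : Finset (Fin 3)).card by simp]
      unfold Hd; congr 1
      ext j
      simp only [Finset.mem_filter, Finset.mem_univ, true_and, Finset.mem_singleton, hu']
      constructor
      · intro h; by_contra hj; simp [Function.update_of_ne hj] at h
      · rintro rfl; simp [Function.update_self]; exact hi.2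
    have h2 : Hd u' v = n := by
      have : Finset.univ.filter (fun j => u' j ≠ v j)
          = (Finset.univ.filter (fun j => u j ≠ v j)).erase i := by
        ext j
        simp only [Finset.mem_filter, Finset.mem_univ, true_and, Finset.mem_erase, hu']
        by_cases hj : j = i
        · subst hj; simp [Function.update_self]
        · simp [Function.update_of_ne hj, hj]
      have hce := Finset.card_erase_of_mem (by simp [hi.2] : i ∈ Finset.univ.filter (fun j => u j ≠ v j))
      simp only [Hd] at hn ⊢
      rw [this, hce]
      omega
    obtain ⟨p, hp⟩ := ih u' h2
    exact ⟨SimpleGraph.Walk.cons (adj_iff_s19.mpr h1) p, by simp [hp]⟩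

lemma dist_eq (u v : V3) : hypercubeQ3.dist u v = Hd u v := by
  obtain ⟨p, hp⟩ := exists_walk u v
  refine le_antisymm (hp ▸ SimpleGraph.dist_le p) ?_
  obtain ⟨q, hq⟩ := p.reachable.exists_walk_length_eq_dist
  exact hq ▸ Hd_le_walk q

def ResolveH (s : Finset V3) : Prop := ∀ u v : V3, u ≠ v → ∃ w ∈ s, Hd u w ≠ Hd v w

instance : DecidablePred ResolveH := fun s => by unfold ResolveH; infer_instance

def IFTH (s : Finset V3) : Prop :=
  (ResolveH s ∧ ∀ w ∈ s, ResolveH (s.erase w)) ∧ ∀ u ∈ s, ∀ v ∈ s, Hd u v ≠ 1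

instance : DecidablePred IFTH := fun s => by unfold IFTH; infer_instance

set_option maxRecDepth 10000 in
lemma lb_test : ∀ s : Finset V3, s.card ≤ 3 → ¬ IFTH s := by decide

lemma mem_test : IFTH {![0,0,0], ![0,1,1], ![1,0,1], ![1,1,0]} := by decide


def R4 : Finset V3 := {![0,0,0], ![0,1,1], ![1,0,1], ![1,1,0]}

lemma resolving_iff (s : Finset V3) : IsResolving hypercubeQ3 ↑s ↔ ResolveH s := by
  unfold IsResolving ResolveH
  simp only [dist_eq, Finset.mem_coe]

lemma iftr_iff (s : Finset V3) : IsIFTResolving hypercubeQ3 ↑s ↔ IFTH s := by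
  unfold IsIFTResolving IsFTResolving _root_.IsIndepSet IFTH
  rw [resolving_iff]
  constructor
  · rintro ⟨⟨h1, h2⟩, h3⟩
    refine ⟨⟨h1, fun w hw => ?_⟩, fun u hu v hv hH => ?_⟩
    · rw [← resolving_iff, Finset.coe_erase]
      exact h2 w hw
    · exact h3 u hu v hv (adj_iff_s19.mpr hH)
  · rintro ⟨⟨h1, h2⟩, h3⟩
    refine ⟨⟨h1, fun w hw => ?_⟩, fun u hu v hv hadj => ?_⟩
    · rw [← Finset.coe_erase, resolving_iff]
      exact h2 w hw
    · exact h3 u hu v hv (adj_iff_s19.mp hadj)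

lemma iftr_R4 : IsIFTResolving hypercubeQ3 ↑R4 := (iftr_iff R4).mpr mem_test

lemma lower_bound {R : Set V3} (h : IsIFTResolving hypercubeQ3 R) : 4 ≤ R.ncard := by
  have hfin : R.Finite := Set.toFinite R
  have hcoe : ↑hfin.toFinset = R := hfin.coe_toFinset
  have hI : IFTH hfin.toFinset := (iftr_iff _).mp (by rw [hcoe]; exact h)
  have h4 : ¬ hfin.toFinset.card ≤ 3 := fun hle => lb_test _ hle hI
  rw [Set.ncard_eq_toFinset_card R hfin]
  omega

end IFRProof

/-- The hypercube `Q₃` admits an independent fault-tolerant resolving set and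
`ifr(Q₃) = 4`. -/
theorem ifr_hypercubeQ3 :
    (∃ R : Set (Fin 3 → Fin 2), IsIFTResolving hypercubeQ3 R) ∧
      ifr hypercubeQ3 = 4 := by
  have hmem : (4 : ℕ) ∈ {k | ∃ R : Set V3, IsIFTResolving hypercubeQ3 R ∧ R.ncard = k} :=
    ⟨↑R4, iftr_R4, by rw [Set.ncard_coe_finset]; decide⟩
  refine ⟨⟨↑R4, iftr_R4⟩, le_antisymm (Nat.sInf_le hmem) ?_⟩
  refine le_csInf ⟨4, hmem⟩ ?_
  rintro k ⟨R, hR, rfl⟩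
  exact lower_bound hR
end
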